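/- arXiv:1405.6291 — 6 statements merged into one kernel-verified Lean document; each statement's English description precedes it below -/
import Mathlib

section
/- Let G be a Polish group. Then G has a neighborhood basis at the identity consisting of open normal subgroups if and only if G has a neighborhood basis at the identity consisting of open subgroups and admits a compatible two-sided invariant metric. -/
/-!
If open normal subgroups `N₀ ≥ N₁ ≥ ⋯` form a basis at `1`, then `ℓ x = ∑_{x ∉ Nₙ} 2⁻ⁿ` is a
conjugation-invariant group norm with `{ℓ < 2⁻ⁿ} ⊆ Nₙ ⊆ {ℓ ≤ 2 · 2⁻ⁿ}`, and `d x y = ℓ (x⁻¹ * y)` is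
a compatible two-sided invariant metric. Conversely, balls around `1` of a two-sided invariant metric
are conjugation invariant, so the normal closure of an open subgroup inside such a ball stays inside
any subgroup containing the ball, and it is open.
-/

open Filter Topology

namespace Subgroup

variable {G : Type*} [Group G]

theorem iInf_eq_bot_of_hasBasis_nhds_one {ι : Type*} {N : ι → Subgroup G} [TopologicalSpace G]
    [T1Space G] (h : (𝓝 (1 : G)).HasBasis (fun _ => True) fun i => (N i : Set G)) : ⨅ i, N i = ⊥ := by
  rw [eq_bot_iff]
  intro x hx
  have : x ∈ ⋂ (i) (_ : True), (N i : Set G) := by simpa using mem_iInf.mp hx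
  rwa [biInter_basis_nhds h] at this

variable (N : ℕ → Subgroup G)

open scoped Classical in
noncomputable def dyadicTerm (x : G) (n : ℕ) : ℝ := if x ∈ N n then 0 else 2⁻¹ ^ n

theorem dyadicTerm_nonneg (x : G) (n : ℕ) : 0 ≤ dyadicTerm N x n := by
  unfold dyadicTerm; split_ifs <;> positivity

theorem dyadicTerm_le (x : G) (n : ℕ) : dyadicTerm N x n ≤ 2⁻¹ ^ n := by
  unfold dyadicTerm; split_ifs <;> simp

theorem summable_dyadicTerm (x : G) : Summable (dyadicTerm N x) :=
  summable_geometric_two.of_nonneg_of_le (dyadicTerm_nonneg N x) fun n => by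
    simpa using dyadicTerm_le N x n

theorem dyadicTerm_one (n : ℕ) : dyadicTerm N 1 n = 0 := by
  simp [dyadicTerm]

theorem dyadicTerm_mul_le (x y : G) (n : ℕ) :
    dyadicTerm N (x * y) n ≤ dyadicTerm N x n + dyadicTerm N y n := by
  by_cases hxy : x * y ∈ N n
  · simpa [dyadicTerm, hxy] using add_nonneg (dyadicTerm_nonneg N x n) (dyadicTerm_nonneg N y n)
  · have : x ∉ N n ∨ y ∉ N n := by
      by_contra! h
      exact hxy (mul_mem h.1 h.2)
    rcases this with h | h
    · simpa [dyadicTerm, hxy, h] using dyadicTerm_nonneg N y n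
    · simpa [dyadicTerm, hxy, h] using dyadicTerm_nonneg N x n

theorem dyadicTerm_inv (x : G) : dyadicTerm N x⁻¹ = dyadicTerm N x := by
  classical
  ext n; exact if_congr inv_mem_iff rfl rfl

theorem dyadicTerm_conj (hN : ∀ n, (N n).Normal) (g x : G) :
    dyadicTerm N (g * x * g⁻¹) = dyadicTerm N x := by
  classical
  ext n
  have hmem : g * x * g⁻¹ ∈ N n ↔ x ∈ N n := by
    rw [mul_assoc, (hN n).mem_comm_iff, inv_mul_cancel_right]
  exact if_congr hmem rfl rfl

noncomputable def dyadicLength (x : G) : ℝ := ∑' n, dyadicTerm N x n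

theorem dyadicLength_conj (hN : ∀ n, (N n).Normal) (g x : G) :
    dyadicLength N (g * x * g⁻¹) = dyadicLength N x :=
  congrArg tsum (dyadicTerm_conj N hN g x)

theorem pow_le_dyadicLength {x : G} {n : ℕ} (hx : x ∉ N n) : 2⁻¹ ^ n ≤ dyadicLength N x := by
  unfold dyadicLength
  simpa [dyadicTerm, hx] using
    (summable_dyadicTerm N x).le_tsum n fun k _ => dyadicTerm_nonneg N x k

theorem dyadicLength_le_of_mem (hN : Antitone N) {x : G} {n : ℕ} (hx : x ∈ N n) :
    dyadicLength N x ≤ 2 * 2⁻¹ ^ n := by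
  rw [← tsum_geometric_inv_two_ge n]
  refine (summable_dyadicTerm N x).tsum_le_tsum (fun k => ?_) ?_
  · split_ifs with hk
    · exact dyadicTerm_le N x k
    · simp [dyadicTerm, hN (not_le.mp hk).le hx]
  · exact summable_geometric_two.of_nonneg_of_le (fun k => by positivity) fun k => by
      split_ifs <;> simp

noncomputable def dyadicNorm (hN : ⨅ n, N n = ⊥) : GroupNorm G where
  toFun := dyadicLength N
  map_one' := by simp [dyadicLength, dyadicTerm_one]
  mul_le' x y := by
    simp only [dyadicLength]
    rw [← (summable_dyadicTerm N x).tsum_add (summable_dyadicTerm N y)]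
    exact (summable_dyadicTerm N _).tsum_le_tsum (dyadicTerm_mul_le N x y)
      ((summable_dyadicTerm N x).add (summable_dyadicTerm N y))
  inv' x := by simp only [dyadicLength, dyadicTerm_inv]
  eq_one_of_map_eq_zero' x hx := by
    rw [← mem_bot, ← hN, mem_iInf]
    intro n
    by_contra hxn
    exact (pow_le_dyadicLength N hxn).not_gt (hx ▸ by positivity)

theorem hasBasis_dyadicLength [TopologicalSpace G]
    (h : (𝓝 (1 : G)).HasAntitoneBasis fun n => (N n : Set G)) :
    (𝓝 (1 : G)).HasBasis (fun ε : ℝ => 0 < ε) fun ε => {x | dyadicLength N x < ε} := by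
  have hanti : Antitone N := fun m n hmn => SetLike.coe_subset_coe.mp (h.antitone hmn)
  refine h.toHasBasis.to_hasBasis (fun n _ => ⟨2⁻¹ ^ n, by positivity, fun x hx => ?_⟩)
    fun ε hε => ?_
  · by_contra hxn
    exact (pow_le_dyadicLength N hxn).not_gt hx
  · obtain ⟨n, hn⟩ := exists_pow_lt_of_lt_one (half_pos hε) (by norm_num : (2⁻¹ : ℝ) < 1)
    exact ⟨n, trivial, fun x hx => (dyadicLength_le_of_mem N hanti hx).trans_lt (by linarith)⟩

theorem hasBasis_open_normal_of_conj_invariant [TopologicalSpace G] [SeparatelyContinuousMul G]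
    (hsub : (𝓝 (1 : G)).HasBasis (fun H : Subgroup G => IsOpen (H : Set G)) (↑))
    (hconj : ∀ U ∈ 𝓝 (1 : G), ∃ V ∈ 𝓝 (1 : G), V ⊆ U ∧ ∀ g, ∀ x ∈ V, g * x * g⁻¹ ∈ V) :
    (𝓝 (1 : G)).HasBasis (fun H : Subgroup G => IsOpen (H : Set G) ∧ H.Normal) (↑) := by
  refine hsub.to_hasBasis (fun A hA => ?_) fun H hH => ⟨H, hH.1, subset_rfl⟩
  obtain ⟨V, hV, hVA, hVconj⟩ := hconj _ (hA.mem_nhds A.one_mem)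
  obtain ⟨K, hK, hKV⟩ := hsub.mem_iff.mp hV
  refine ⟨normalClosure K, ⟨isOpen_mono le_normalClosure hK, normalClosure_normal⟩, ?_⟩
  suffices normalClosure (K : Set G) ≤ A from this
  refine (closure_le A).mpr fun x hx => ?_
  obtain ⟨k, hk, hkx⟩ := Group.mem_conjugatesOfSet_iff.mp hx
  obtain ⟨g, rfl⟩ := isConj_iff.mp hkx
  exact hVA (hVconj g k (hKV hk))

end Subgroup

theorem GroupNorm.exists_biInvariant_metric {G : Type*} [Group G] [TopologicalSpace G]
    [IsTopologicalGroup G] (ℓ : GroupNorm G) (hconj : ∀ g x, ℓ (g * x * g⁻¹) = ℓ x)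
    (hbasis : (𝓝 (1 : G)).HasBasis (fun ε : ℝ => 0 < ε) fun ε => {x | ℓ x < ε}) :
    ∃ d : G → G → ℝ,
      (∀ x y, d x y = 0 ↔ x = y) ∧ (∀ x y, d x y = d y x) ∧
      (∀ x y z, d x z ≤ d x y + d y z) ∧
      (∀ g x y, d (g * x) (g * y) = d x y) ∧
      (∀ g x y, d (x * g) (y * g) = d x y) ∧
      ∀ x : G, (𝓝 x).HasBasis (fun ε : ℝ => 0 < ε) fun ε => {y | d x y < ε} := by
  refine ⟨fun x y => ℓ (x⁻¹ * y), fun x y => ?_, fun x y => ?_, fun x y z => ?_,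
    fun g x y => ?_, fun g x y => ?_, fun x => ?_⟩
  · rw [map_eq_zero_iff_eq_one, inv_mul_eq_one]
  · dsimp only
    rw [← map_inv_eq_map ℓ, mul_inv_rev, inv_inv]
  · simpa [mul_assoc] using map_mul_le_add ℓ (x⁻¹ * y) (y⁻¹ * z)
  · simp [mul_assoc]
  · dsimp only
    rw [show (x * g)⁻¹ * (y * g) = g⁻¹ * (x⁻¹ * y) * g⁻¹⁻¹ by group, hconj]
  · rw [← map_mul_left_nhds_one x]
    simpa only [Set.image_mul_left, Set.preimage_ofPred_eq] using hbasis.map (x * ·)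

theorem apply_one_conj_of_biInvariant {G : Type*} [Group G] {d : G → G → ℝ}
    (hleft : ∀ g x y, d (g * x) (g * y) = d x y) (hright : ∀ g x y, d (x * g) (y * g) = d x y)
    (g x : G) : d 1 (g * x * g⁻¹) = d 1 x := by
  rw [← hright g, ← hleft g⁻¹]
  group

/-- a Polish group has a neighborhood basis at the identity of open normal
subgroups iff it has a neighborhood basis at the identity of open subgroups and admits a
compatible two-sided invariant metric. -/
theorem stmt_6 (G : Type*) [Group G] [TopologicalSpace G] [IsTopologicalGroup G]
    [PolishSpace G] :
    (𝓝 (1 : G)).HasBasis (fun H : Subgroup G => IsOpen (H : Set G) ∧ H.Normal)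
        (fun H => (H : Set G)) ↔
      ((𝓝 (1 : G)).HasBasis (fun H : Subgroup G => IsOpen (H : Set G))
          (fun H => (H : Set G)) ∧
        ∃ d : G → G → ℝ,
          (∀ x y, d x y = 0 ↔ x = y) ∧ (∀ x y, d x y = d y x) ∧
          (∀ x y z, d x z ≤ d x y + d y z) ∧
          (∀ g x y, d (g * x) (g * y) = d x y) ∧
          (∀ g x y, d (x * g) (y * g) = d x y) ∧
          ∀ x : G, (𝓝 x).HasBasis (fun ε : ℝ => 0 < ε) fun ε => {y | d x y < ε}) := by
  constructor
  · intro hB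
    obtain ⟨N, hN, hNanti⟩ := hB.exists_antitone_subbasis
    refine ⟨hB.to_hasBasis (fun H hH => ⟨H, hH.1, subset_rfl⟩)
      fun H hH => hB.mem_iff.mp (hH.mem_nhds H.one_mem), ?_⟩
    have hbot := Subgroup.iInf_eq_bot_of_hasBasis_nhds_one hNanti.toHasBasis
    exact (Subgroup.dyadicNorm N hbot).exists_biInvariant_metric
      (Subgroup.dyadicLength_conj N fun n => (hN n).2) (Subgroup.hasBasis_dyadicLength N hNanti)
  · rintro ⟨hsub, d, -, -, -, hleft, hright, hball⟩
    refine Subgroup.hasBasis_open_normal_of_conj_invariant hsub fun U hU => ?_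
    obtain ⟨ε, hε, hεU⟩ := (hball 1).mem_iff.mp hU
    refine ⟨_, (hball 1).mem_of_mem hε, hεU, fun g x hx => ?_⟩
    simpa only [Set.mem_ofPred_eq, apply_one_conj_of_biInvariant hleft hright] using hx
end

section
/- Let G ≤ ∏_n G_n be a closed subdirect product of countable discrete abelian groups, and suppose G = R ⊕ D where R = G ∩ ∏_n R_n and D = G ∩ ∏_n D'_n arise from decompositions G_n = R_n ⊕ D'_n with R_n reduced and D'_n divisible, such that the projection π_n[D_{⟨m⟩}] is divisible for all m and all n > m, where D_{⟨m⟩} = {g ∈ D : g(k) = 0 for k ≤ m}. Then D is topologically isomorphic to a countable product of countable discrete divisible abelian groups. -/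
/-- An abelian group is divisible if every element has an `n`-th root for every `n ≥ 1`. -/
def IsDivisibleAddGroup (A : Type*) [AddCommGroup A] : Prop :=
  ∀ (a : A) (n : ℕ), 0 < n → ∃ b : A, n • b = a

/-- A subgroup `H` is divisible if every element of `H` is `n`-divisible within `H`. -/
def DivisibleSub {A : Type*} [AddCommGroup A] (H : AddSubgroup A) : Prop :=
  ∀ a ∈ H, ∀ n : ℕ, 0 < n → ∃ b ∈ H, n • b = a

/-- An abelian group is reduced if it has no nontrivial divisible subgroup. -/
def IsReducedAddGroup (A : Type*) [AddCommGroup A] : Prop :=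
  ∀ H : AddSubgroup A, DivisibleSub H → H = ⊥

/-- `e` is a topological isomorphism of `D` (with its subspace topology) with the product
`∀ n, B n` where each `B n` carries the discrete topology. -/
def DiscreteProductRealization {X : Type*} [TopologicalSpace X] [AddCommGroup X]
    (D : AddSubgroup X) (B : ℕ → Type) [∀ n, AddCommGroup (B n)]
    (e : D ≃+ ∀ n, B n) : Prop :=
  @Continuous D (∀ n, B n) _ (@Pi.topologicalSpace ℕ B fun _ => ⊥) e ∧
  @Continuous (∀ n, B n) D (@Pi.topologicalSpace ℕ B fun _ => ⊥) _ e.symm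

section Aux

variable {X : Type*} [AddCommGroup X]

lemma divisibleSub_retraction {K H : AddSubgroup X} (hKH : K ≤ H) (hdiv : DivisibleSub K) :
    ∃ r : H →+ K, ∀ (y : X) (hy : y ∈ K), r ⟨y, hKH hy⟩ = ⟨y, hy⟩ := by
  haveI : DivisibleBy K ℕ :=
    { div := fun a n =>
        if h : 0 < n then ⟨(hdiv a a.2 n h).choose, (hdiv a a.2 n h).choose_spec.1⟩ else 0
      div_zero := fun a => by simp
      div_cancel := fun {n} a hn => by
        have h : 0 < n := Nat.pos_of_ne_zero hn
        refine Subtype.ext ?_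
        have h2 := (hdiv a a.2 n h).choose_spec.2
        push_cast [dif_pos h]
        simpa using h2 }
  haveI : DivisibleBy K ℤ := AddGroup.divisibleByIntOfDivisibleByNat K
  obtain ⟨r, hr⟩ := (Module.Baer.of_divisible ↥K).extension_property_addMonoidHom
    (AddSubgroup.inclusion hKH) (AddSubgroup.inclusion_injective hKH) (AddMonoidHom.id K)
  refine ⟨r, fun y hy => ?_⟩
  have := DFunLike.congr_fun hr ⟨y, hy⟩
  simpa [AddSubgroup.inclusion] using this

noncomputable def chainS (D : AddSubgroup X) (Dlt : ℕ → AddSubgroup X)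
    (h0 : ∀ d : D, (d : X) ∈ Dlt 0)
    (r : ∀ n, ↥(Dlt n) →+ ↥(Dlt (n + 1))) :
    ∀ n, {f : ↥D →+ X // ∀ d, f d ∈ Dlt n}
  | 0 => ⟨D.subtype, h0⟩
  | (n + 1) =>
    let p := chainS D Dlt h0 r n
    ⟨((Dlt (n + 1)).subtype.comp ((r n).comp
        (AddMonoidHom.codRestrict p.1 (Dlt n) p.2))),
      fun d => ((r n) _).2⟩

lemma chainS_succ (D : AddSubgroup X) (Dlt : ℕ → AddSubgroup X)
    (h0 : ∀ d : D, (d : X) ∈ Dlt 0)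
    (r : ∀ n, ↥(Dlt n) →+ ↥(Dlt (n + 1))) (n : ℕ) (d : D) :
    ((chainS D Dlt h0 r (n + 1)).1 d : X)
      = ((r n) ⟨(chainS D Dlt h0 r n).1 d, (chainS D Dlt h0 r n).2 d⟩ : X) := rfl

lemma chainS_zero (D : AddSubgroup X) (Dlt : ℕ → AddSubgroup X)
    (h0 : ∀ d : D, (d : X) ∈ Dlt 0)
    (r : ∀ n, ↥(Dlt n) →+ ↥(Dlt (n + 1))) (d : D) :
    (chainS D Dlt h0 r 0).1 d = (d : X) := rfl

end Aux

/-- under the decomposition hypotheses, the quasi-divisible summand `D` is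
topologically isomorphic to a countable product of countable discrete divisible abelian
groups. -/
theorem stmt_11 (A : ℕ → Type*) [∀ n, AddCommGroup (A n)] [∀ n, Countable (A n)]
    [∀ n, TopologicalSpace (A n)] [∀ n, DiscreteTopology (A n)]
    (G : AddSubgroup (∀ n, A n)) (hclosed : IsClosed (G : Set (∀ n, A n)))
    (hsub : ∀ n (a : A n), ∃ g ∈ G, g n = a)
    (Rn Dn : ∀ n, AddSubgroup (A n))
    (hRred : ∀ n, ∀ H : AddSubgroup (A n), DivisibleSub H → H ≤ Rn n → H = ⊥)
    (hDdiv : ∀ n, DivisibleSub (Dn n))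
    (hcompl : ∀ n, IsCompl (Rn n) (Dn n))
    (R : AddSubgroup (∀ n, A n)) (hR : R = G ⊓ AddSubgroup.pi Set.univ Rn)
    (D : AddSubgroup (∀ n, A n)) (hD : D = G ⊓ AddSubgroup.pi Set.univ Dn)
    (hsum : R ⊔ D = G) (hdisj : R ⊓ D = ⊥)
    (hprojdiv : ∀ m n : ℕ, m < n →
      DivisibleSub ((D ⊓ AddSubgroup.pi {k | k ≤ m} fun _ => ⊥).map
        (Pi.evalAddMonoidHom A n))) :
    ∃ (B : ℕ → Type) (ib : ∀ n, AddCommGroup (B n)),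
      (∀ n, Countable (B n)) ∧ (∀ n, @IsDivisibleAddGroup (B n) (ib n)) ∧
      ∃ e : D ≃+ ∀ n, B n, @DiscreteProductRealization _ _ _ D B ib e := by
  classical
  set Dlt : ℕ → AddSubgroup (∀ n, A n) :=
    (fun n => D ⊓ AddSubgroup.pi {k | k < n} fun _ => ⊥) with hDltdef
  have hmem : ∀ (n : ℕ) (x : ∀ n, A n), x ∈ Dlt n ↔ x ∈ D ∧ ∀ k < n, x k = 0 := by
    intro n x
    simp [hDltdef, AddSubgroup.mem_inf, AddSubgroup.mem_pi]
  have hDle : ∀ n, Dlt n ≤ D := fun n => inf_le_left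
  have hmono : ∀ {m n : ℕ}, m ≤ n → Dlt n ≤ Dlt m := by
    intro m n hmn x hx
    rw [hmem] at hx ⊢
    exact ⟨hx.1, fun k hk => hx.2 k (lt_of_lt_of_le hk hmn)⟩
  have h0mem : ∀ d : D, (d : ∀ n, A n) ∈ Dlt 0 := by
    intro d
    rw [hmem]
    exact ⟨d.2, fun k hk => absurd hk (Nat.not_lt_zero k)⟩
  have hsucc : ∀ (n : ℕ) (x : ∀ n, A n), x ∈ Dlt (n + 1) ↔ x ∈ Dlt n ∧ x n = 0 := by
    intro n x
    rw [hmem, hmem]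
    constructor
    · rintro ⟨hx, h⟩
      exact ⟨⟨hx, fun k hk => h k (hk.trans (Nat.lt_succ_self n))⟩, h n (Nat.lt_succ_self n)⟩
    · rintro ⟨⟨hx, h⟩, hn⟩
      refine ⟨hx, fun k hk => ?_⟩
      rcases Nat.lt_succ_iff_lt_or_eq.1 hk with h' | h'
      · exact h k h'
      · subst h'; exact hn
  have hDclosed : IsClosed (D : Set (∀ n, A n)) := by
    rw [hD]
    have h1 : IsClosed ((AddSubgroup.pi Set.univ Dn : AddSubgroup (∀ n, A n)) : Set (∀ n, A n)) := by
      have h2 : ((AddSubgroup.pi Set.univ Dn : AddSubgroup (∀ n, A n)) : Set (∀ n, A n))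
          = Set.pi Set.univ (fun n => (Dn n : Set (A n))) := rfl
      rw [h2]
      exact isClosed_set_pi fun i _ => isClosed_discrete _
    rw [AddSubgroup.coe_inf]
    exact hclosed.inter h1
  have hlim : ∀ (t : ℕ → ∀ n, A n) (x : ∀ n, A n), (∀ M, t M ∈ D) →
      (∀ k M, k ≤ M → t M k = x k) → x ∈ D := by
    intro t x ht hconv
    have htend : Filter.Tendsto t Filter.atTop (nhds x) := by
      rw [tendsto_pi_nhds]
      intro k
      refine tendsto_nhds_of_eventually_eq ?_
      exact Filter.eventually_atTop.2 ⟨k, fun M hM => hconv k M hM⟩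
    exact hDclosed.mem_of_tendsto htend (Filter.Eventually.of_forall ht)
  have hpd : ∀ m n : ℕ, m < n →
      DivisibleSub ((Dlt (m + 1)).map (Pi.evalAddMonoidHom A n)) := by
    intro m n h
    have hset : {k : ℕ | k ≤ m} = {k : ℕ | k < m + 1} := by
      ext k; simp [Nat.lt_succ_iff]
    have h2 := hprojdiv m n h
    rw [hset] at h2
    exact h2
  have hdivDlt : ∀ m : ℕ, DivisibleSub (Dlt (m + 1)) := by
    intro m d hd n hn
    set Inv : ℕ → (∀ n, A n) → Prop :=
      (fun j b => b ∈ Dlt (m + 1) ∧ n • b - d ∈ Dlt (m + 1 + j)) with hInvdef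
    have inv0 : Inv 0 (0 : ∀ n, A n) := by
      refine ⟨zero_mem _, ?_⟩
      have : n • (0 : ∀ n, A n) - d = -d := by simp
      rw [this]
      exact neg_mem hd
    have key : ∀ j b, Inv j b → ∃ b', Inv (j + 1) b' ∧ b' - b ∈ Dlt (m + 1 + j) := by
      intro j b hb
      obtain ⟨hb1, hb2⟩ := hb
      have hy : (n • b - d) (m + 1 + j) ∈ (Dlt (m + 1 + j)).map (Pi.evalAddMonoidHom A (m + 1 + j)) :=
        AddSubgroup.mem_map.2 ⟨_, hb2, rfl⟩
      have hdiv' := hpd (m + j) (m + 1 + j) (by omega)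
      have e1 : m + j + 1 = m + 1 + j := by omega
      rw [e1] at hdiv'
      obtain ⟨β, hβmem, hβ⟩ := hdiv' _ hy n hn
      obtain ⟨z, hz, hzval⟩ := AddSubgroup.mem_map.1 hβmem
      refine ⟨b - z, ⟨sub_mem hb1 (hmono (by omega) hz), ?_⟩, ?_⟩
      · have hx : n • (b - z) - d = (n • b - d) - n • z := by
          rw [smul_sub]; abel
        rw [hx]
        have e2 : m + 1 + (j + 1) = (m + 1 + j) + 1 := by omega
        rw [e2, hsucc]
        refine ⟨sub_mem hb2 (nsmul_mem hz n), ?_⟩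
        have hzv : (n • z) (m + 1 + j) = n • (z (m + 1 + j)) := rfl
        have hβ' : n • (z (m + 1 + j)) = (n • b - d) (m + 1 + j) := by
          rw [show z (m + 1 + j) = β from hzval]
          exact hβ
        simp [Pi.sub_apply, hzv, hβ']
      · have : b - z - b = -z := by abel
        rw [this]
        exact neg_mem hz
    choose F hF1 hF2 using key
    let g : ∀ j, {b : ∀ k, A k // Inv j b} := fun j =>
      Nat.rec (motive := fun j => {b : ∀ k, A k // Inv j b}) ⟨0, inv0⟩
        (fun j p => ⟨F j p.1 p.2, hF1 j p.1 p.2⟩) j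
    have hgstep : ∀ j, ((g (j + 1)).1 : ∀ k, A k) - (g j).1 ∈ Dlt (m + 1 + j) := fun j =>
      hF2 j (g j).1 (g j).2
    set x : ∀ k, A k := (fun k => (g (k + 1)).1 k) with hxdef
    have stab : ∀ k M, k + 1 ≤ M → (g M).1 k = x k := by
      intro k M hM
      induction M, hM using Nat.le_induction with
      | base => rfl
      | succ M hM ih =>
        have hdiff := hgstep M
        rw [hmem] at hdiff
        have h1 : ((g (M + 1)).1 - (g M).1) k = 0 := hdiff.2 k (by omega)
        have h2 : (g (M + 1)).1 k = (g M).1 k := by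
          have := sub_eq_zero.1 h1
          simpa using this
        rw [h2, ih]
    have xmemD : x ∈ D :=
      hlim (fun M => (g (M + 1)).1) x (fun M => hDle _ ((g (M + 1)).2.1))
        (fun k M hkM => stab k (M + 1) (by omega))
    refine ⟨x, ?_, ?_⟩
    · rw [hmem]
      refine ⟨xmemD, fun k hk => ?_⟩
      have h3 := (g (k + 1)).2.1
      rw [hmem] at h3
      exact h3.2 k hk
    · funext k
      have h4 := (g (k + 1)).2.2
      rw [hmem] at h4
      have h5 : (n • (g (k + 1)).1 - d) k = 0 := h4.2 k (by omega)
      have h6 : (n • (g (k + 1)).1) k = d k := by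
        have := sub_eq_zero.1 h5
        simpa using this
      calc (n • x) k = n • ((g (k + 1)).1 k) := rfl
      _ = (n • (g (k + 1)).1) k := rfl
      _ = d k := h6
  -- retractions
  have hretr : ∀ n, ∃ r : ↥(Dlt n) →+ ↥(Dlt (n + 1)),
      ∀ (y) (hy : y ∈ Dlt (n + 1)), r ⟨y, hmono (Nat.le_succ n) hy⟩ = ⟨y, hy⟩ :=
    fun n => divisibleSub_retraction (hmono (Nat.le_succ n)) (hdivDlt n)
  choose r hrfix using hretr
  set S : ∀ n, {f : ↥D →+ (∀ k, A k) // ∀ d, f d ∈ Dlt n} := chainS D Dlt h0mem r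
    with hSdef
  have hSzero : ∀ d : D, (S 0).1 d = (d : ∀ i, A i) := fun d => rfl
  have hSsucc : ∀ (n : ℕ) (d : D), ((S (n + 1)).1 d : ∀ i, A i)
      = ((r n) ⟨(S n).1 d, (S n).2 d⟩ : ∀ i, A i) := fun n d => rfl
  have hfix : ∀ (n : ℕ) (d : D), (d : ∀ i, A i) ∈ Dlt n → (S n).1 d = (d : ∀ i, A i) := by
    intro n
    induction n with
    | zero => intro d _; rfl
    | succ n ih =>
      intro d hd
      rw [hSsucc]
      have h1 : (S n).1 d = (d : ∀ i, A i) := ih d (hmono (Nat.le_succ n) hd)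
      have h2 : (⟨(S n).1 d, (S n).2 d⟩ : ↥(Dlt n))
          = ⟨(d : ∀ i, A i), hmono (Nat.le_succ n) hd⟩ := Subtype.ext h1
      rw [h2, hrfix n _ hd]
  have hstep : ∀ (n : ℕ) (d : D), ((S n).1 d) n = 0 → (S (n + 1)).1 d = (S n).1 d := by
    intro n d hzero
    have hmemn : (S n).1 d ∈ Dlt (n + 1) := (hsucc n _).2 ⟨(S n).2 d, hzero⟩
    rw [hSsucc]
    exact congrArg Subtype.val (hrfix n ((S n).1 d) hmemn)
  have hScongr : ∀ (n : ℕ) (d d' : D), (S n).1 d = (S n).1 d' →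
      ∀ m, n ≤ m → (S m).1 d = (S m).1 d' := by
    intro n d d' h m hm
    induction m, hm using Nat.le_induction with
    | base => exact h
    | succ M _ ih =>
      rw [hSsucc, hSsucc]
      exact congrArg Subtype.val (congrArg (r M) (Subtype.ext ih))
  -- the building blocks
  set Bsub : ∀ n, AddSubgroup (A n) := fun n => (Dlt n).map (Pi.evalAddMonoidHom A n)
    with hBsubdef
  have hBmem : ∀ (n : ℕ) (d : D), (S n).1 d n ∈ Bsub n := fun n d =>
    AddSubgroup.mem_map.2 ⟨_, (S n).2 d, rfl⟩
  set E0 : ↥D →+ ∀ n, ↥(Bsub n) := AddMonoidHom.mk'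
    (fun d => fun n => ⟨(S n).1 d n, hBmem n d⟩)
    (by
      intro a b
      funext n
      refine Subtype.ext ?_
      show (S n).1 (a + b) n = (S n).1 a n + (S n).1 b n
      rw [map_add]
      rfl) with hE0def
  have hE0val : ∀ (d : D) (n : ℕ), (E0 d n : A n) = (S n).1 d n := fun d n => rfl
  -- congruence of the components
  have hcomp : ∀ (k : ℕ) (d d' : D), (∀ j, j ≤ k → (d : ∀ i, A i) j = (d' : ∀ i, A i) j) →
      E0 d k = E0 d' k := by
    intro k d d' hj
    have hmem' : ((d - d' : D) : ∀ i, A i) ∈ Dlt (k + 1) := by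
      rw [hmem]
      refine ⟨(d - d').2, fun i hi => ?_⟩
      show ((d : ∀ i, A i) - (d' : ∀ i, A i)) i = 0
      rw [Pi.sub_apply, sub_eq_zero]
      exact hj i (by omega)
    have h1 : (S k).1 (d - d') = ((d - d' : D) : ∀ i, A i) :=
      hfix k _ (hmono (Nat.le_succ k) hmem')
    have h2 : (S k).1 (d - d') k = 0 := by
      rw [h1]
      rw [hmem] at hmem'
      exact hmem'.2 k (Nat.lt_succ_self k)
    refine Subtype.ext ?_
    show (S k).1 d k = (S k).1 d' k
    have h3 : (S k).1 d k - (S k).1 d' k = 0 := by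
      rw [map_sub] at h2
      simpa using h2
    exact sub_eq_zero.1 h3
  -- injectivity
  have hinjkey : ∀ d : D, (∀ k, (S k).1 d k = 0) → d = 0 := by
    intro d hk0
    have hall : ∀ k, (S k).1 d = (d : ∀ i, A i) := by
      intro k
      induction k with
      | zero => rfl
      | succ k ih => rw [hstep k d (hk0 k), ih]
    have hmem2 : ∀ k, (d : ∀ i, A i) ∈ Dlt k := fun k => (hall k) ▸ (S k).2 d
    have hzero : ∀ k, (d : ∀ i, A i) k = 0 := by
      intro k
      have := hmem2 (k + 1)
      rw [hmem] at this
      exact this.2 k (Nat.lt_succ_self k)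
    exact Subtype.ext (funext hzero)
  have hE0inj : Function.Injective E0 := by
    intro a b h
    have h1 : E0 (a - b) = 0 := by rw [map_sub, h, sub_self]
    have h2 : ∀ k, (S k).1 (a - b) k = 0 := by
      intro k
      have := congrFun h1 k
      exact congrArg Subtype.val this
    have := hinjkey (a - b) h2
    rwa [sub_eq_zero] at this
  -- lifting blocks
  have hu : ∀ (j : ℕ) (b : ↥(Bsub j)), ∃ u : D, ((u : ∀ i, A i) ∈ Dlt j) ∧
      ((u : ∀ i, A i) j = (b : A j)) ∧ ((S (j + 1)).1 u = 0) ∧ ((b : A j) = 0 → u = 0) := by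
    intro j b
    by_cases hb : (b : A j) = 0
    · exact ⟨0, zero_mem _, by simp [hb], map_zero _, fun _ => rfl⟩
    · obtain ⟨x, hx, hxval⟩ := AddSubgroup.mem_map.1 b.2
      have hxD : x ∈ D := hDle j hx
      have hsd : (S (j + 1)).1 ⟨x, hxD⟩ ∈ D := hDle _ ((S (j + 1)).2 ⟨x, hxD⟩)
      refine ⟨⟨x, hxD⟩ - ⟨(S (j + 1)).1 ⟨x, hxD⟩, hsd⟩, ?_, ?_, ?_, fun h => absurd h hb⟩
      · exact sub_mem hx (hmono (Nat.le_succ j) ((S (j + 1)).2 ⟨x, hxD⟩))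
      · have h5 := (S (j + 1)).2 (⟨x, hxD⟩ : D)
        rw [hmem] at h5
        show (x - (S (j + 1)).1 ⟨x, hxD⟩) j = (b : A j)
        rw [Pi.sub_apply, h5.2 j (Nat.lt_succ_self j), sub_zero]
        exact hxval
      · have h6 : (S (j + 1)).1 (⟨(S (j + 1)).1 ⟨x, hxD⟩, hsd⟩ : D)
            = (S (j + 1)).1 (⟨x, hxD⟩ : D) :=
          hfix (j + 1) _ ((S (j + 1)).2 ⟨x, hxD⟩)
        rw [map_sub, h6, sub_self]
  choose u hu1 hu2 hu3 hu4 using hu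
  have huS : ∀ (j : ℕ) (b : ↥(Bsub j)) (m : ℕ), j + 1 ≤ m → (S m).1 (u j b) = 0 := by
    intro j b m hm
    have h0' : (S (j + 1)).1 (u j b) = (S (j + 1)).1 (0 : D) := by
      rw [hu3, map_zero]
    have := hScongr (j + 1) (u j b) 0 h0' m hm
    rw [this, map_zero]
  -- surjectivity with support control
  have hsurj : ∀ b : ∀ n, ↥(Bsub n), ∃ d : D, E0 d = b ∧
      (∀ k, (∀ j, j ≤ k → (b j : A j) = 0) → (d : ∀ i, A i) k = 0) := by
    intro b
    set t : ℕ → D := fun M => ∑ j ∈ Finset.range (M + 1), u j (b j) with htdef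
    have htsucc : ∀ M, t (M + 1) = t M + u (M + 1) (b (M + 1)) := by
      intro M
      simp only [htdef]
      exact Finset.sum_range_succ _ _
    have hstabt : ∀ k M, k ≤ M → ((t M : ∀ i, A i)) k = ((t k : ∀ i, A i)) k := by
      intro k M hM
      induction M, hM using Nat.le_induction with
      | base => rfl
      | succ M hM ih =>
        have h7 := hu1 (M + 1) (b (M + 1))
        rw [hmem] at h7
        have h8 : ((u (M + 1) (b (M + 1)) : D) : ∀ i, A i) k = 0 := h7.2 k (by omega)
        calc ((t (M + 1) : D) : ∀ i, A i) k
            = ((t M : D) : ∀ i, A i) k + ((u (M + 1) (b (M + 1)) : D) : ∀ i, A i) k := by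
              rw [htsucc M, AddSubgroup.coe_add, Pi.add_apply]
          _ = ((t k : D) : ∀ i, A i) k := by rw [h8, add_zero, ih]
    have hdmem : (fun k => ((t k : ∀ i, A i)) k) ∈ D :=
      hlim (fun M => (t M : ∀ i, A i)) _ (fun M => (t M).2) (fun k M hk => hstabt k M hk)
    refine ⟨⟨fun k => ((t k : ∀ i, A i)) k, hdmem⟩, ?_, ?_⟩
    · funext k
      refine Subtype.ext ?_
      have hek : E0 ⟨fun k => ((t k : ∀ i, A i)) k, hdmem⟩ k = E0 (t k) k := by
        apply hcomp
        intro j hj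
        exact (hstabt j k hj).symm
      have hsum2 : (S k).1 (t k) = ∑ j ∈ Finset.range (k + 1), (S k).1 (u j (b j)) := by
        simp only [htdef]
        exact map_sum _ _ _
      have hsum3 : (S k).1 (t k) k = ∑ j ∈ Finset.range (k + 1), ((S k).1 (u j (b j))) k := by
        rw [hsum2]
        exact Finset.sum_apply k _ _
      have hterm0 : ∀ j ∈ Finset.range k, ((S k).1 (u j (b j))) k = 0 := by
        intro j hj
        rw [huS j (b j) k (by simpa [Nat.succ_le_iff] using Finset.mem_range.1 hj)]
        rfl
      have hlast : ((S k).1 (u k (b k))) k = (b k : A k) := by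
        rw [hfix k (u k (b k)) (hu1 k (b k))]
        exact hu2 k (b k)
      calc (E0 ⟨fun k => ((t k : ∀ i, A i)) k, hdmem⟩ k : A k)
          = (E0 (t k) k : A k) := congrArg Subtype.val hek
        _ = (S k).1 (t k) k := rfl
        _ = ∑ j ∈ Finset.range (k + 1), ((S k).1 (u j (b j))) k := hsum3
        _ = (b k : A k) := by
            rw [Finset.sum_range_succ, Finset.sum_eq_zero hterm0, zero_add, hlast]
    · intro k hk
      have hz : ∀ j ∈ Finset.range (k + 1), u j (b j) = 0 := fun j hj =>
        hu4 j (b j) (hk j (Nat.lt_succ_iff.1 (Finset.mem_range.1 hj)))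
      show ((t k : D) : ∀ i, A i) k = 0
      have ht0 : t k = 0 := by
        simp only [htdef]
        exact Finset.sum_eq_zero hz
      rw [ht0]
      rfl
  -- divisibility of the blocks
  have hBsubdiv : ∀ n, DivisibleSub (Bsub n) := by
    intro n
    cases n with
    | zero =>
      have hB0 : Bsub 0 = Dn 0 := by
        apply le_antisymm
        · rintro a ⟨x, hx, rfl⟩
          have hxD : x ∈ D := hDle 0 hx
          rw [hD] at hxD
          exact (AddSubgroup.mem_pi Set.univ).1 (AddSubgroup.mem_inf.1 hxD).2 0 (Set.mem_univ 0)
        · intro a ha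
          obtain ⟨g, hg, hg0⟩ := hsub 0 a
          rw [← hsum] at hg
          obtain ⟨rr, hrr, dd, hdd, hsum'⟩ := AddSubgroup.mem_sup.1 hg
          have hr0 : rr 0 ∈ Rn 0 := by
            rw [hR] at hrr
            exact (AddSubgroup.mem_pi Set.univ).1 (AddSubgroup.mem_inf.1 hrr).2 0 (Set.mem_univ 0)
          have hd0 : dd 0 ∈ Dn 0 := by
            rw [hD] at hdd
            exact (AddSubgroup.mem_pi Set.univ).1 (AddSubgroup.mem_inf.1 hdd).2 0 (Set.mem_univ 0)
          have heq : a - dd 0 = rr 0 := by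
            rw [← hg0, ← hsum']
            show rr 0 + dd 0 - dd 0 = rr 0
            abel
          have hmem0 : a - dd 0 ∈ Rn 0 ⊓ Dn 0 :=
            AddSubgroup.mem_inf.2 ⟨heq ▸ hr0, sub_mem ha hd0⟩
          rw [(hcompl 0).inf_eq_bot, AddSubgroup.mem_bot, sub_eq_zero] at hmem0
          refine ⟨dd, ?_, hmem0.symm⟩
          rw [SetLike.mem_coe, hmem]
          exact ⟨hdd, fun k hk => absurd hk (Nat.not_lt_zero k)⟩
      rw [hB0]
      exact hDdiv 0
    | succ m => exact hpd m (m + 1) (Nat.lt_succ_self m)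
  -- transport to `Type 0`
  haveI hsmall : ∀ n, Small.{0} ↥(Bsub n) := fun n => Countable.toSmall _
  let B : ℕ → Type := fun n => Shrink ↥(Bsub n)
  let ib : ∀ n, AddCommGroup (B n) := fun n => inferInstance
  let eqS : ∀ n, ↥(Bsub n) ≃+ B n := fun n =>
    { equivShrink ↥(Bsub n) with map_add' := fun x y => equivShrink_add x y }
  let σ : (∀ n, ↥(Bsub n)) ≃+ (∀ n, B n) := AddEquiv.piCongrRight eqS
  have hE0surj : Function.Surjective E0 := fun bb =>
    ⟨(hsurj bb).choose, (hsurj bb).choose_spec.1⟩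
  let E0e : ↥D ≃+ (∀ n, ↥(Bsub n)) := AddEquiv.ofBijective E0 ⟨hE0inj, hE0surj⟩
  let e : ↥D ≃+ ∀ n, B n := E0e.trans σ
  have hcount : ∀ n, Countable (B n) := fun n =>
    Countable.of_equiv _ (equivShrink ↥(Bsub n))
  have hBdiv : ∀ n, IsDivisibleAddGroup (B n) := by
    intro n a k hk
    obtain ⟨b0, hb0mem, hb0⟩ :=
      hBsubdiv n (((eqS n).symm a : ↥(Bsub n)) : A n) ((eqS n).symm a).2 k hk
    refine ⟨eqS n ⟨b0, hb0mem⟩, ?_⟩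
    have h1 : k • (⟨b0, hb0mem⟩ : ↥(Bsub n)) = (eqS n).symm a := by
      refine Subtype.ext ?_
      push_cast
      exact hb0
    rw [← map_nsmul, h1, AddEquiv.apply_symm_apply]
  -- topology
  letI tB : ∀ n, TopologicalSpace (B n) := fun _ => ⊥
  haveI dB : ∀ n, DiscreteTopology (B n) := fun n => ⟨rfl⟩
  have hcylA : ∀ (x : ∀ i, A i) (m : ℕ), IsOpen {y : ∀ i, A i | ∀ j ≤ m, y j = x j} := by
    intro x m
    have hset : {y : ∀ i, A i | ∀ j ≤ m, y j = x j}
        = ⋂ j ∈ Set.Iic m, (fun y : ∀ i, A i => y j) ⁻¹' {x j} := by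
      ext y
      simp [Set.mem_Iic]
    rw [hset]
    exact (Set.finite_Iic m).isOpen_biInter fun j _ =>
      (continuous_apply j).isOpen_preimage _ (isOpen_discrete _)
  have hcylB : ∀ (x : ∀ n, B n) (m : ℕ), IsOpen {y : ∀ n, B n | ∀ j ≤ m, y j = x j} := by
    intro x m
    have hset : {y : ∀ n, B n | ∀ j ≤ m, y j = x j}
        = ⋂ j ∈ Set.Iic m, (fun y : ∀ n, B n => y j) ⁻¹' {x j} := by
      ext y
      simp [Set.mem_Iic]
    rw [hset]
    exact (Set.finite_Iic m).isOpen_biInter fun j _ =>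
      (continuous_apply j).isOpen_preimage _ (isOpen_discrete _)
  have happ : ∀ (d : ↥D) (k : ℕ), e d k = eqS k (E0 d k) := fun d k => rfl
  have hcont1 : Continuous (⇑e : ↥D → ∀ n, B n) := by
    apply continuous_pi
    intro k
    rw [continuous_def]
    intro s _
    rw [isOpen_iff_mem_nhds]
    intro d hd
    have hopen : IsOpen ((Subtype.val : ↥D → ∀ i, A i) ⁻¹'
        {y | ∀ j ≤ k, y j = (d : ∀ i, A i) j}) :=
      (hcylA _ k).preimage continuous_subtype_val
    refine Filter.mem_of_superset (hopen.mem_nhds (fun j hj => rfl)) ?_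
    intro d' hd'
    have hE : E0 d' k = E0 d k := hcomp k d' d (fun j hj => hd' j hj)
    show e d' k ∈ s
    rw [happ, hE, ← happ]
    exact hd
  have hextract : ∀ (d : ↥D) (s : Set ↥D), s ∈ nhds d →
      ∃ m, ∀ d' : ↥D, (∀ j ≤ m, (d' : ∀ i, A i) j = (d : ∀ i, A i) j) → d' ∈ s := by
    intro d s hs
    rw [nhds_subtype_eq_comap] at hs
    obtain ⟨t', ht', hts⟩ := hs
    rw [nhds_pi] at ht'
    obtain ⟨I, hIfin, uset, husets, hsub'⟩ := Filter.mem_pi.1 ht'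
    obtain ⟨m, hm⟩ : ∃ m, ∀ i ∈ I, i ≤ m := by
      obtain ⟨m, hm⟩ := Set.Finite.bddAbove hIfin
      exact ⟨m, fun i hi => hm hi⟩
    refine ⟨m, fun d' hd' => hts ?_⟩
    apply hsub'
    intro i hi
    rw [hd' i (hm i hi)]
    exact mem_of_mem_nhds (husets i)
  have hcont2 : Continuous (⇑e.symm : (∀ n, B n) → ↥D) := by
    rw [continuous_iff_continuousAt]
    intro b
    rw [ContinuousAt, Filter.tendsto_def]
    intro s hs
    obtain ⟨m, hm⟩ := hextract (e.symm b) s hs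
    have hcylmem : {b' : ∀ n, B n | ∀ j ≤ m, b' j = b j} ∈ nhds b :=
      (hcylB b m).mem_nhds (fun j hj => rfl)
    refine Filter.mem_of_superset hcylmem ?_
    intro b' hb'
    apply hm
    intro j hj
    obtain ⟨dd, hdd1, hdd2⟩ := hsurj (σ.symm (b' - b))
    have hdd1' : E0e.symm (σ.symm (b' - b)) = dd := by
      apply E0e.injective
      rw [AddEquiv.apply_symm_apply]
      exact hdd1.symm
    have hsymm_sub : e.symm b' - e.symm b = dd := by
      rw [← map_sub]
      exact hdd1'
    have hzero : (dd : ∀ i, A i) j = 0 := by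
      apply hdd2 j
      intro i hi
      have hbi : (b' - b) i = 0 := by
        rw [Pi.sub_apply, sub_eq_zero]
        exact hb' i (le_trans hi hj)
      show (((eqS i).symm ((b' - b) i)) : A i) = 0
      rw [hbi, map_zero]
      rfl
    have h9 : ((e.symm b' - e.symm b : ↥D) : ∀ i, A i) j = 0 := by
      rw [hsymm_sub]
      exact hzero
    have h10 : (e.symm b' : ∀ i, A i) j - (e.symm b : ∀ i, A i) j = 0 := by
      simpa using h9
    exact sub_eq_zero.1 h10
  refine ⟨B, ib, hcount, hBdiv, e, ?_⟩
  unfold DiscreteProductRealization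
  exact ⟨hcont1, hcont2⟩
end

section
/- Let G be a Polish group, K a compact normal subgroup of G, and α a continuous action of G on a Polish space X. Then the set O of K-orbits {[x]_K : x ∈ X} is a Borel subset of the hyperspace K(X) of compact subsets of X with the Vietoris topology, and the map x ↦ [x]_K is continuous from X to K(X). -/
/-!
The orbit map `x ↦ K • x` is the image of the fixed compact set `K` under the jointly continuous
map `(x, k) ↦ k • x`, so it is continuous into the Vietoris hyperspace. Its range is closed, hence
Borel: if orbits `K • z` converge to a compact set `C` and `x ∈ C`, then some `y ∈ K • z` is close
to `x`, and `K • y = K • z`, so `K • x` is close to `C` by continuity at `x`; thus `C = K • x`.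
-/

open TopologicalSpace Set

namespace TopologicalSpace.NonemptyCompacts

theorem isClosed_range_of_apply_eq_of_mem {X : Type*} [EMetricSpace X]
    {f : X → NonemptyCompacts X} (hf : Continuous f) (h : ∀ x, ∀ y ∈ f x, f y = f x) :
    IsClosed (range f) := by
  refine closure_subset_iff_isClosed.1 fun C hC => ?_
  obtain ⟨x, hx⟩ := C.nonempty
  refine ⟨x, eq_of_forall_edist_le fun ε hε => ?_⟩
  have hε₂ : 0 < ε / 2 := ENNReal.half_pos hε.ne'
  obtain ⟨δ, hδ, hfx⟩ := EMetric.continuousAt_iff.1 hf.continuousAt (ε / 2) hε₂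
  obtain ⟨_, ⟨z, rfl⟩, hCz⟩ := EMetric.mem_closure_iff.1 hC (min δ (ε / 2)) (lt_min hδ hε₂)
  obtain ⟨y, hy, hxy⟩ := Metric.exists_edist_lt_of_hausdorffEDist_lt hx hCz
  have hfy : edist (f y) (f x) < ε / 2 :=
    hfx <| by rw [edist_comm]; exact hxy.trans_le (min_le_left _ _)
  calc edist (f x) C ≤ edist (f x) (f y) + edist C (f z) := by
        rw [h z y hy, edist_comm C]; exact edist_triangle _ _ _
    _ ≤ ε / 2 + ε / 2 := by
        gcongr
        · rw [edist_comm]; exact hfy.le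
        · exact (hCz.trans_le (min_le_right _ _)).le
    _ = ε := ENNReal.add_halves ε

end TopologicalSpace.NonemptyCompacts

namespace Subgroup

variable {G X : Type*} [Group G] [TopologicalSpace G] [TopologicalSpace X] [MulAction G X]
  [ContinuousSMul G X] (K : Subgroup G) (hK : IsCompact (K : Set G))

def orbitCompacts (x : X) : NonemptyCompacts X :=
  (⟨⟨K, hK⟩, ⟨1, K.one_mem⟩⟩ : NonemptyCompacts G).map (· • x) (by fun_prop)

theorem coe_orbitCompacts (x : X) : (K.orbitCompacts hK x : Set X) = MulAction.orbit K x := by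
  ext y
  exact ⟨fun ⟨k, hk, hky⟩ => ⟨⟨k, hk⟩, hky⟩, fun ⟨k, hky⟩ => ⟨k, k.2, hky⟩⟩

/- For a metric space `X`, Mathlib builds the Hausdorff metric on `NonemptyCompacts X` so that its
topology is the Vietoris topology itself, so this applies in the statement below too. -/
theorem continuous_orbitCompacts : Continuous (K.orbitCompacts hK : X → NonemptyCompacts X) :=
  continuous_const.nonemptyCompacts_map' (by fun_prop)

theorem orbitCompacts_eq_of_mem {x y : X} (h : y ∈ K.orbitCompacts hK x) :
    K.orbitCompacts hK y = K.orbitCompacts hK x := by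
  rw [SetLike.mem_coe.symm, coe_orbitCompacts] at h
  apply NonemptyCompacts.ext
  rw [coe_orbitCompacts, coe_orbitCompacts, MulAction.orbit_eq_iff.2 h]

end Subgroup

theorem stmt_13_general (G : Type*) [Group G] [TopologicalSpace G]
    (X : Type*) [MetricSpace X]
    [MulAction G X] [ContinuousSMul G X]
    (K : Subgroup G) (hK : IsCompact (K : Set G)) :
    ∃ f : X → NonemptyCompacts X,
      (∀ x, (f x : Set X) = {y | ∃ k ∈ K, k • x = y}) ∧
      Continuous f ∧
      @MeasurableSet (NonemptyCompacts X) (borel _) (Set.range f) := by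
  refine ⟨K.orbitCompacts hK, fun x => rfl, K.continuous_orbitCompacts hK, ?_⟩
  borelize (NonemptyCompacts X)
  exact (NonemptyCompacts.isClosed_range_of_apply_eq_of_mem (K.continuous_orbitCompacts hK)
    fun _ _ => K.orbitCompacts_eq_of_mem hK).measurableSet

/-- for a continuous action of a Polish group `G` on a Polish space `X` and a
compact normal subgroup `K ≤ G`, the map sending `x` to its `K`-orbit is continuous into
the hyperspace of nonempty compact subsets of `X` (Vietoris topology), and the set of
`K`-orbits is Borel in this hyperspace. -/
theorem stmt_13 (G : Type*) [Group G] [TopologicalSpace G] [IsTopologicalGroup G]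
    [PolishSpace G] (X : Type*) [MetricSpace X] [PolishSpace X]
    [MulAction G X] [ContinuousSMul G X]
    (K : Subgroup G) [K.Normal] (hK : IsCompact (K : Set G)) :
    ∃ f : X → NonemptyCompacts X,
      (∀ x, (f x : Set X) = {y | ∃ k ∈ K, k • x = y}) ∧
      Continuous f ∧
      @MeasurableSet (NonemptyCompacts X) (borel _) (Set.range f) :=
  stmt_13_general G X K hK
end

section
/- Let G ≤ ∏_n G_n be a closed subdirect product of countable discrete abelian torsion groups, and suppose that for every prime p the p-Sylow subgroup S_p of G is locally compact. Then, given an enumeration {p_k} of the primes, there is a strictly increasing sequence (i_k) of natural numbers such that each K_k = G_{⟨i_k⟩} ∩ S_{p_k} is compact, and the internal product K = ∏_k K_k is a compact subgroup of G. -/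
/-!
The subgroups `G_⟨m⟩` form a basis of closed neighbourhoods of `0`, so local compactness of
`S_p` makes `G_⟨m⟩ ∩ S_p` compact for all large `m`; this fixes the thresholds `i k`.
Since `K_k` vanishes on the coordinates below `k`, the sum of a family `(f k) ∈ ∏ K_k` is finite
in every coordinate, so summation is a continuous homomorphism `∏ K_k → ∏ A_n` out of a compact
group. Its image is a compact subgroup containing every `K_k`, hence also the closure of the
subgroup they generate.
-/

open Filter Topology Set

theorem exists_strictMono_forall_le (m : ℕ → ℕ) : ∃ i : ℕ → ℕ, StrictMono i ∧ ∀ k, m k ≤ i k :=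
  ⟨fun k => ∑ j ∈ Finset.range (k + 1), (m j + 1),
    strictMono_nat_of_lt_succ fun k => by
      simp only [Finset.sum_range_succ _ (k + 1)]
      omega,
    fun k => (Finset.single_le_sum (f := fun j => m j + 1) (fun _ _ => Nat.zero_le _)
      (Finset.self_mem_range_succ k)).trans' (Nat.le_succ _)⟩

theorem exists_isCompact_inter_of_hasBasis {X ι : Type*} [TopologicalSpace X] {S : Set X}
    [LocallyCompactSpace S] {x : X} (hx : x ∈ S) {p : ι → Prop} {V : ι → Set X}
    (hV : (𝓝 x).HasBasis p V) (hVc : ∀ i, IsClosed (V i)) : ∃ i, p i ∧ IsCompact (S ∩ V i) := by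
  obtain ⟨N, hN, hNx⟩ := exists_compact_mem_nhds (⟨x, hx⟩ : S)
  rw [nhds_subtype] at hNx
  obtain ⟨i, hi, hVN⟩ := (hV.comap Subtype.val).mem_iff.1 hNx
  refine ⟨i, hi, ?_⟩
  rw [← Subtype.image_preimage_coe]
  exact (hN.of_isClosed_subset ((hVc i).preimage continuous_subtype_val) hVN).image
    continuous_subtype_val

namespace Pi

variable {A : ℕ → Type*} [∀ n, TopologicalSpace (A n)]

theorem isClosed_setOf_forall_le_eq [∀ n, T1Space (A n)] (x : ∀ n, A n) (m : ℕ) :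
    IsClosed {g : ∀ n, A n | ∀ n ≤ m, g n = x n} :=
  isClosed_set_pi (s := fun n => {x n}) fun _ _ => isClosed_singleton

variable [∀ n, DiscreteTopology (A n)]

theorem hasBasis_nhds_of_discrete (x : ∀ n, A n) :
    (𝓝 x).HasBasis (fun _ => True) (fun m : ℕ => {g | ∀ n ≤ m, g n = x n}) := by
  simp only [nhds_pi, nhds_discrete]
  refine (hasBasis_pi_pure x).to_hasBasis (fun I hI => ?_)
    (fun m _ => ⟨Iic m, finite_Iic m, subset_rfl⟩)
  obtain ⟨m, hm⟩ := hI.bddAbove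
  exact ⟨m, trivial, fun g hg n hn => hg n (hm hn)⟩

theorem exists_isCompact_inter_vanishing [∀ n, Zero (A n)] {S : Set (∀ n, A n)}
    [LocallyCompactSpace S] (h0 : 0 ∈ S) :
    ∃ m, ∀ m' ≥ m, IsCompact (S ∩ {g | ∀ n ≤ m', g n = 0}) := by
  obtain ⟨m, -, hm⟩ := exists_isCompact_inter_of_hasBasis h0 (hasBasis_nhds_of_discrete 0)
    (isClosed_setOf_forall_le_eq 0)
  refine ⟨m, fun m' hm' => ?_⟩
  have hsub : {g : ∀ n, A n | ∀ n ≤ m', g n = 0} ⊆ {g | ∀ n ≤ m, g n = 0} :=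
    fun g hg n hn => hg n (hn.trans hm')
  rw [← inter_eq_right.2 hsub, ← inter_assoc]
  exact hm.inter_right (isClosed_setOf_forall_le_eq 0 m')

end Pi

section TruncatedSum

variable {A : ℕ → Type*} [∀ n, AddCommGroup (A n)] (K : ℕ → AddSubgroup (∀ n, A n))

/-- When every `g ∈ K k` vanishes below `k`, this is the coordinatewise sum `∑ k, f k`. -/
def truncatedSum : (∀ k, K k) →+ ∀ n, A n where
  toFun f n := ∑ k ∈ Finset.range (n + 1), (f k : ∀ n, A n) n
  map_zero' := by funext n; simp
  map_add' f f' := by funext n; simp [Finset.sum_add_distrib]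

theorem continuous_truncatedSum [∀ n, TopologicalSpace (A n)] [∀ n, ContinuousAdd (A n)] :
    Continuous (truncatedSum K) :=
  continuous_pi fun n => by
    simp only [truncatedSum, AddMonoidHom.coe_mk, ZeroHom.coe_mk]
    exact continuous_finsetSum _ fun k _ =>
      (continuous_apply n).comp (continuous_subtype_val.comp (continuous_apply k))

variable {K}

theorem truncatedSum_single (hK : ∀ k, ∀ g ∈ K k, ∀ n < k, g n = 0) (k : ℕ) (g : K k) :
    truncatedSum K (Pi.single k g) = g := by
  funext n
  change ∑ j ∈ Finset.range (n + 1), (((Pi.single k g : ∀ j, K j) j : K j) : ∀ n, A n) n =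
    (g : ∀ n, A n) n
  rw [Finset.sum_eq_single k (fun j _ hjk => by simp [Pi.single_eq_of_ne hjk])
    (fun hk => ?_), Pi.single_eq_same]
  rw [Pi.single_eq_same, hK k g g.2 n (by simpa using hk)]

theorem isCompact_closure_addSubgroupClosure_iUnion [∀ n, TopologicalSpace (A n)]
    [∀ n, ContinuousAdd (A n)] [∀ n, T2Space (A n)] (hc : ∀ k, IsCompact (K k : Set (∀ n, A n)))
    (hK : ∀ k, ∀ g ∈ K k, ∀ n < k, g n = 0) :
    IsCompact (closure (AddSubgroup.closure (⋃ k, (K k : Set (∀ n, A n))) : Set (∀ n, A n))) := by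
  have := fun k => isCompact_iff_compactSpace.mp (hc k)
  refine (isCompact_range (continuous_truncatedSum K)).closure_of_subset ?_
  change _ ≤ (truncatedSum K).range
  rw [AddSubgroup.closure_le]
  exact iUnion_subset fun k g hg => ⟨Pi.single k ⟨g, hg⟩, truncatedSum_single hK k ⟨g, hg⟩⟩

end TruncatedSum

theorem stmt_15_general (A : ℕ → Type*) [∀ n, AddCommGroup (A n)]
    [∀ n, TopologicalSpace (A n)] [∀ n, DiscreteTopology (A n)]
    (G : AddSubgroup (∀ n, A n)) (hclosed : IsClosed (G : Set (∀ n, A n)))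
    (hSylow : ∀ p : ℕ, p.Prime →
      LocallyCompactSpace {g : ∀ n, A n // g ∈ G ∧ ∀ n, ∃ k : ℕ, addOrderOf (g n) = p ^ k})
    (pk : ℕ → ℕ) (hpk : ∀ k, (pk k).Prime) :
    ∃ i : ℕ → ℕ, StrictMono i ∧
      (∀ k, IsCompact {g : ∀ n, A n |
        (g ∈ G ∧ ∀ m ≤ i k, g m = 0) ∧ ∀ n, ∃ j : ℕ, addOrderOf (g n) = pk k ^ j}) ∧
      IsCompact (closure (AddSubgroup.closure (⋃ k, {g : ∀ n, A n |
        (g ∈ G ∧ ∀ m ≤ i k, g m = 0) ∧ ∀ n, ∃ j : ℕ, addOrderOf (g n) = pk k ^ j})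
          : Set (∀ n, A n))) ∧
      closure (AddSubgroup.closure (⋃ k, {g : ∀ n, A n |
        (g ∈ G ∧ ∀ m ≤ i k, g m = 0) ∧ ∀ n, ∃ j : ℕ, addOrderOf (g n) = pk k ^ j})
          : Set (∀ n, A n)) ⊆ (G : Set (∀ n, A n)) := by
  let Sylow : ℕ → Set (∀ n, A n) :=
    fun k => {g | g ∈ G ∧ ∀ n, ∃ j : ℕ, addOrderOf (g n) = pk k ^ j}
  have hcompact (k : ℕ) : ∃ m, ∀ m' ≥ m, IsCompact (Sylow k ∩ {g | ∀ n ≤ m', g n = 0}) := by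
    have : LocallyCompactSpace (Sylow k) := hSylow (pk k) (hpk k)
    exact Pi.exists_isCompact_inter_vanishing (S := Sylow k)
      ⟨G.zero_mem, fun n => ⟨0, addOrderOf_zero⟩⟩
  choose m hm using hcompact
  obtain ⟨i, hmono, hmi⟩ := exists_strictMono_forall_le m
  let K (k : ℕ) : AddSubgroup (∀ n, A n) :=
    G ⊓ AddSubgroup.pi (Iic (i k)) (fun _ => ⊥) ⊓
      AddSubgroup.pi univ (fun n => AddCommGroup.primaryComponent (A n) (pk k))
  have hK (k : ℕ) : (K k : Set (∀ n, A n)) = {g : ∀ n, A n |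
      (g ∈ G ∧ ∀ m ≤ i k, g m = 0) ∧ ∀ n, ∃ j : ℕ, addOrderOf (g n) = pk k ^ j} := by
    have := Fact.mk (hpk k)
    ext g
    simp only [K, SetLike.mem_coe, AddSubgroup.mem_inf, AddSubgroup.mem_pi, AddSubgroup.mem_bot,
      AddCommGroup.mem_primaryComponent_iff_addOrderOf, mem_Iic, mem_univ, true_imp_iff,
      mem_ofPred_eq]
  have hKc (k : ℕ) : IsCompact (K k : Set (∀ n, A n)) := by
    convert hm k (i k) (hmi k) using 1
    rw [hK k]
    ext g
    simp only [Sylow, mem_inter_iff, mem_ofPred_eq]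
    tauto
  refine ⟨i, hmono, ?_⟩
  simp only [← hK]
  refine ⟨hKc, isCompact_closure_addSubgroupClosure_iUnion hKc fun k g hg n hn =>
    AddSubgroup.mem_bot.1 (hg.1.2 n (hn.le.trans (hmono.id_le k))), ?_⟩
  refine closure_minimal ?_ hclosed
  rw [SetLike.coe_subset_coe, AddSubgroup.closure_le]
  exact iUnion_subset fun k => (inf_le_left.trans inf_le_left : K k ≤ G)

/-- in a closed subdirect product `G` of countable discrete abelian torsion
groups all of whose Sylow subgroups are locally compact, for any enumeration `pk` of the
primes there is a strictly increasing sequence `i` such that each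
`K_k = G_⟨i k⟩ ∩ S_{pk k}` is compact and the subgroup `K` they generate (a closed
subgroup of `G`, every element being a convergent sum) is compact. -/
theorem stmt_15 (A : ℕ → Type*) [∀ n, AddCommGroup (A n)] [∀ n, Countable (A n)]
    [∀ n, TopologicalSpace (A n)] [∀ n, DiscreteTopology (A n)]
    (G : AddSubgroup (∀ n, A n)) (hclosed : IsClosed (G : Set (∀ n, A n)))
    (hsub : ∀ n (a : A n), ∃ g ∈ G, g n = a)
    (htor : ∀ n, AddMonoid.IsTorsion (A n))
    (hSylow : ∀ p : ℕ, p.Prime →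
      LocallyCompactSpace {g : ∀ n, A n // g ∈ G ∧ ∀ n, ∃ k : ℕ, addOrderOf (g n) = p ^ k})
    (pk : ℕ → ℕ) (hpk : ∀ k, (pk k).Prime) (hinj : Function.Injective pk)
    (hall : ∀ q : ℕ, q.Prime → ∃ k, pk k = q) :
    ∃ i : ℕ → ℕ, StrictMono i ∧
      (∀ k, IsCompact {g : ∀ n, A n |
        (g ∈ G ∧ ∀ m ≤ i k, g m = 0) ∧ ∀ n, ∃ j : ℕ, addOrderOf (g n) = pk k ^ j}) ∧
      IsCompact (closure (AddSubgroup.closure (⋃ k, {g : ∀ n, A n |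
        (g ∈ G ∧ ∀ m ≤ i k, g m = 0) ∧ ∀ n, ∃ j : ℕ, addOrderOf (g n) = pk k ^ j})
          : Set (∀ n, A n))) ∧
      closure (AddSubgroup.closure (⋃ k, {g : ∀ n, A n |
        (g ∈ G ∧ ∀ m ≤ i k, g m = 0) ∧ ∀ n, ∃ j : ℕ, addOrderOf (g n) = pk k ^ j})
          : Set (∀ n, A n)) ⊆ (G : Set (∀ n, A n)) :=
  stmt_15_general A G hclosed hSylow pk hpk
end

section
/- Let G be a closed subdirect product of countable discrete abelian groups such that every neighborhood of the identity contains an element generating an infinite discrete subgroup. Then G contains a closed subgroup topologically isomorphic to ℤ^ℕ with the product topology. -/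
open AddSubgroup Filter Finset Topology

section aux

variable {A : ℕ → Type*} [∀ n, AddCommGroup (A n)]
    [∀ n, TopologicalSpace (A n)] [∀ n, DiscreteTopology (A n)]

/-- basic open sets fixing finitely many coordinates -/
lemma stmt16_aux_open (T : Finset ℕ) (x : ∀ n, A n) :
    IsOpen {y : ∀ n, A n | ∀ i ∈ T, y i = x i} := by
  have : {y : ∀ n, A n | ∀ i ∈ T, y i = x i} =
      ⋂ i ∈ T, (fun y : ∀ n, A n => y i) ⁻¹' {x i} := by
    ext y; simp
  rw [this]
  exact isOpen_biInter_finset fun i _ =>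
    (isOpen_discrete _).preimage (continuous_apply i)

/-- key extraction: given a finite forbidden set `T`, there is `g ∈ G` vanishing on `T`
whose cyclic group is detected injectively on a finite set of coordinates. -/
lemma stmt16_key (G : AddSubgroup (∀ n, A n))
    (hbig : ∀ U : Set (∀ n, A n), IsOpen U → (0 : ∀ n, A n) ∈ U →
      ∃ g ∈ G, g ∈ U ∧ Infinite (AddSubgroup.zmultiples g) ∧
        DiscreteTopology (AddSubgroup.zmultiples g)) (T : Finset ℕ) :
    ∃ g, ∃ F : Finset ℕ, g ∈ G ∧ (∀ i ∈ T, g i = 0) ∧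
      ∀ k : ℤ, k ≠ 0 → ∃ i ∈ F, k • g i ≠ 0 := by
  obtain ⟨g, hgG, hgU, hinf, hdisc⟩ :=
    hbig {y : ∀ n, A n | ∀ i ∈ T, y i = 0} (stmt16_aux_open T 0) (by simp)
  have hinj : Function.Injective fun k : ℤ => k • g :=
    injective_zsmul_iff_not_isOfFinAddOrder.mpr
      (infinite_zmultiples.mp (Set.infinite_coe_iff.mp hinf))
  -- get a basic neighborhood of 0 meeting the cyclic group only in 0
  have h0 : ({0} : Set (zmultiples g)) ∈ 𝓝 (0 : zmultiples g) := by
    simp [mem_nhds_discrete]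
  have hzero : ((0 : zmultiples g) : ∀ n, A n) = 0 := rfl
  rw [show (0 : zmultiples g) = ⟨0, zero_mem _⟩ from rfl,
    nhds_subtype_eq_comap, Filter.mem_comap] at h0
  obtain ⟨t, ht, hts⟩ := h0
  rw [nhds_pi, Filter.mem_pi] at ht
  obtain ⟨I, hIfin, t', ht', hsub⟩ := ht
  refine ⟨g, hIfin.toFinset, hgG, hgU, ?_⟩
  intro k hk
  by_contra hcon
  push_neg at hcon
  have hmem : k • g ∈ t := by
    apply hsub
    intro i hi
    have : k • g i = 0 := hcon i (hIfin.mem_toFinset.mpr hi)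
    have h0i : (0 : A i) ∈ t' i := mem_of_mem_nhds (ht' i)
    simpa [this] using h0i
  have : (⟨k • g, zsmul_mem (mem_zmultiples g) k⟩ : zmultiples g) ∈
      Subtype.val ⁻¹' t := hmem
  have hkg : k • g = 0 := by
    have := hts this
    simpa [Subtype.ext_iff] using this
  exact hk (hinj (by simpa using hkg))

end aux

/-- a closed subdirect product `G` of countable discrete abelian groups in
which every neighborhood of the identity contains an element generating an infinite
discrete subgroup contains a closed subgroup topologically isomorphic to `ℤ^ℕ`. -/
theorem stmt_16 (A : ℕ → Type*) [∀ n, AddCommGroup (A n)] [∀ n, Countable (A n)]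
    [∀ n, TopologicalSpace (A n)] [∀ n, DiscreteTopology (A n)]
    (G : AddSubgroup (∀ n, A n)) (hclosed : IsClosed (G : Set (∀ n, A n)))
    (hsub : ∀ n (a : A n), ∃ g ∈ G, g n = a)
    (hbig : ∀ U : Set (∀ n, A n), IsOpen U → (0 : ∀ n, A n) ∈ U →
      ∃ g ∈ G, g ∈ U ∧ Infinite (AddSubgroup.zmultiples g) ∧
        DiscreteTopology (AddSubgroup.zmultiples g)) :
    ∃ H : AddSubgroup (∀ n, A n), H ≤ G ∧ IsClosed (H : Set (∀ n, A n)) ∧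
      ∃ e : (ℕ → ℤ) ≃+ H, Continuous e ∧ Continuous e.symm := by
  classical
  choose gT FT hmemG' hzero hdet using stmt16_key G hbig
  -- the inductively defined forbidden sets
  set forb : ℕ → Finset ℕ :=
    fun j => Nat.rec {0} (fun j T => T ∪ FT T ∪ {j + 1}) j with hforb
  have hforb_succ : ∀ j, forb (j + 1) = forb j ∪ FT (forb j) ∪ {j + 1} := fun j => rfl
  set gs : ℕ → ∀ n, A n := fun j => gT (forb j) with hgs
  set Fs : ℕ → Finset ℕ := fun j => FT (forb j) with hFs
  have hmono : ∀ j j', j ≤ j' → forb j ⊆ forb j' := by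
    intro j j' h
    induction j' with
    | zero => simpa [Nat.le_zero.mp h] using Finset.Subset.refl _
    | succ j' IH =>
      rcases Nat.lt_or_ge j (j' + 1) with h' | h'
      · refine (IH (Nat.lt_succ_iff.mp h')).trans ?_
        rw [hforb_succ]
        exact (Finset.subset_union_left).trans Finset.subset_union_left
      · have : j = j' + 1 := le_antisymm h h'
        subst this; exact Finset.Subset.refl _
  have hself : ∀ j, j ∈ forb j := by
    intro j
    induction j with
    | zero => simp [hforb]
    | succ j IH =>
      rw [hforb_succ]
      exact Finset.mem_union_right _ (Finset.mem_singleton_self _)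
  have hle_mem : ∀ i j, i ≤ j → i ∈ forb j := fun i j h => hmono i j h (hself i)
  have hFsub : ∀ j, Fs j ⊆ forb (j + 1) := by
    intro j
    rw [hforb_succ]
    exact fun x hx => Finset.mem_union_left _ (Finset.mem_union_right _ hx)
  have P1 : ∀ j, gs j ∈ G := fun j => hmemG' (forb j)
  have P2 : ∀ j n, n ≤ j → gs j n = 0 := fun j n h => hzero (forb j) n (hle_mem n j h)
  have P3 : ∀ j j', j < j' → ∀ i ∈ Fs j, gs j' i = 0 := by
    intro j j' h i hi
    exact hzero (forb j') i (hmono (j + 1) j' h (hFsub j hi))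
  have P4 : ∀ j, ∀ k : ℤ, k ≠ 0 → ∃ i ∈ Fs j, k • gs j i ≠ 0 := fun j => hdet (forb j)
  -- the embedding
  set phi : (ℕ → ℤ) → ∀ n, A n :=
    fun c n => ∑ j ∈ Finset.range n, c j • gs j n with hphi
  have lemA : ∀ (c : ℕ → ℤ) (n N : ℕ), n ≤ N →
      phi c n = ∑ j ∈ Finset.range N, c j • gs j n := by
    intro c n N h
    refine Finset.sum_subset (Finset.range_subset_range.mpr h) ?_
    intro j _ hj
    rw [P2 j n (le_of_not_gt fun hc => hj (Finset.mem_range.mpr hc)), smul_zero]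
  have lemB : ∀ (c : ℕ → ℤ) (j : ℕ), ∀ i ∈ Fs j,
      phi c i = ∑ j' ∈ Finset.range (j + 1), c j' • gs j' i := by
    intro c j i hi
    rw [lemA c i (max i (j + 1)) (le_max_left _ _)]
    refine (Finset.sum_subset (Finset.range_subset_range.mpr (le_max_right _ _)) ?_).symm
    intro j' _ hj'
    have : j < j' := Nat.lt_of_succ_le (le_of_not_gt fun hc => hj' (Finset.mem_range.mpr hc))
    rw [P3 j j' this i hi, smul_zero]
  -- determination of coefficients from values on `forb (j+1)`
  have hC : ∀ (c d : ℕ → ℤ) (j : ℕ),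
      (∀ i ∈ forb (j + 1), phi c i = phi d i) → c j = d j := by
    intro c d j
    induction j using Nat.strong_induction_on with
    | _ j IH =>
      intro hagree
      by_contra hne
      obtain ⟨i, hiF, hik⟩ := P4 j (c j - d j) (sub_ne_zero.mpr hne)
      have h1 : phi c i = phi d i := hagree i (hFsub j hiF)
      rw [lemB c j i hiF, lemB d j i hiF, Finset.sum_range_succ, Finset.sum_range_succ] at h1
      have heq : ∀ j' < j, c j' = d j' := fun j' hj' =>
        IH j' hj' (fun i hi => hagree i (hmono (j' + 1) (j + 1) (Nat.succ_le_succ hj'.le) hi))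
      have h2 : ∑ j' ∈ Finset.range j, c j' • gs j' i
          = ∑ j' ∈ Finset.range j, d j' • gs j' i :=
        Finset.sum_congr rfl fun j' hj' => by rw [heq j' (Finset.mem_range.mp hj')]
      rw [h2] at h1
      have h3 : c j • gs j i = d j • gs j i := add_left_cancel h1
      apply hik
      rw [sub_zsmul, h3, add_neg_cancel]
  have hinj : Function.Injective phi := by
    intro c d h
    funext j
    exact hC c d j (fun i _ => by rw [h])
  -- phi lands in G
  have hmemG : ∀ c, phi c ∈ G := by
    intro c
    have htend : Tendsto (fun N => ∑ j ∈ Finset.range N, c j • gs j) atTop (𝓝 (phi c)) := by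
      rw [tendsto_pi_nhds]
      intro n
      apply tendsto_atTop_of_eventually_const (i₀ := n)
      intro N hN
      rw [Finset.sum_apply]
      exact (lemA c n N hN).symm
    exact hclosed.mem_of_tendsto htend
      (Filter.Eventually.of_forall fun N =>
        AddSubgroup.sum_mem G fun j _ => AddSubgroup.zsmul_mem G (P1 j) (c j))
  -- the monoid hom
  set Φ : (ℕ → ℤ) →+ (∀ n, A n) :=
    { toFun := phi
      map_zero' := by funext n; simp [hphi]
      map_add' := by
        intro c d
        funext n
        simp only [hphi, Pi.add_apply, add_zsmul]
        rw [Finset.sum_add_distrib] } with hΦ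
  have hΦapp : ∀ c, Φ c = phi c := fun c => rfl
  refine ⟨Φ.range, ?_, ?_, ?_⟩
  · rintro x ⟨c, rfl⟩
    exact hmemG c
  · -- closedness
    apply isClosed_of_closure_subset
    intro x hx
    have hex : ∀ j : ℕ, ∃ d : ℕ → ℤ, ∀ i ∈ forb (j + 1), phi d i = x i := by
      intro j
      obtain ⟨y, hy1, hy2⟩ := mem_closure_iff.mp hx _
        (stmt16_aux_open (forb (j + 1)) x) (fun i _ => rfl)
      obtain ⟨d, hd⟩ := hy2
      have hdy : phi d = y := hd
      exact ⟨d, fun i hi => by rw [hdy]; exact hy1 i hi⟩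
    choose d hd using hex
    refine ⟨fun j => d j j, ?_⟩
    funext n
    have hdn : ∀ j < n, d n j = d j j := by
      intro j hj
      refine hC (d n) (d j) j (fun i hi => ?_)
      rw [hd n i (hmono (j + 1) (n + 1) (Nat.succ_le_succ hj.le) hi), hd j i hi]
    calc Φ (fun j => d j j) n
        = ∑ j ∈ Finset.range n, d n j • gs j n := by
          rw [hΦapp]
          exact Finset.sum_congr rfl fun j hj => by
            rw [hdn j (Finset.mem_range.mp hj)]
      _ = phi (d n) n := rfl
      _ = x n := hd n n (hle_mem n (n + 1) (Nat.le_succ n))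
  · -- the topological isomorphism
    have hcont : Continuous phi := by
      apply continuous_pi
      intro n
      apply continuous_finset_sum
      intro j _
      exact (continuous_of_discreteTopology
        (f := fun k : ℤ => k • gs j n)).comp (continuous_apply j)
    have hinj' : Function.Injective ⇑Φ := hinj
    refine ⟨AddMonoidHom.ofInjective hinj', ?_, ?_⟩
    · apply continuous_induced_rng.mpr
      have : (Subtype.val ∘ fun c => AddMonoidHom.ofInjective hinj' c) = phi := by
        funext c
        exact AddMonoidHom.ofInjective_apply hinj'
      rw [this]
      exact hcont
    · set e := AddMonoidHom.ofInjective hinj' with he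
      have hval : ∀ h : Φ.range, phi (e.symm h) = (h : ∀ n, A n) := by
        intro h
        have : (e (e.symm h) : ∀ n, A n) = (h : ∀ n, A n) := by
          rw [e.apply_symm_apply]
        rwa [he, AddMonoidHom.ofInjective_apply] at this
      apply continuous_pi
      intro j
      rw [continuous_discrete_rng]
      intro m
      rw [isOpen_iff_forall_mem_open]
      intro h hh
      refine ⟨{h' : Φ.range | ∀ i ∈ forb (j + 1),
          (h' : ∀ n, A n) i = (h : ∀ n, A n) i}, ?_, ?_, fun i _ => rfl⟩
      · intro h' hh'
        have hcd : e.symm h' j = e.symm h j :=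
          hC (e.symm h') (e.symm h) j (fun i hi => by
            rw [hval h', hval h]; exact hh' i hi)
        simpa [hcd] using hh
      · have hset : {h' : Φ.range | ∀ i ∈ forb (j + 1),
            (h' : ∀ n, A n) i = (h : ∀ n, A n) i} =
            ⋂ i ∈ forb (j + 1),
              (fun h' : Φ.range => (h' : ∀ n, A n) i) ⁻¹' {(h : ∀ n, A n) i} := by
          ext y; simp
        rw [hset]
        exact isOpen_biInter_finset fun i _ =>
          (isOpen_discrete _).preimage ((continuous_apply i).comp continuous_subtype_val)
end

section
/- Let G be a Polish group, H a closed subgroup of G, and β a continuous action of H on a Polish space X. Then there is a Polish space Y and a continuous action α of G on Y such that the orbit equivalence relation E_β is Borel if and only if E_α is Borel. -/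
/-!
If `E_β` is Borel, the trivial action of `G` on a point already works. Otherwise it suffices to
Borel-reduce `E_β` to the orbit relation of a continuous `G`-action on a Polish space, which then
cannot be Borel either. That space is a model of the induced space `G ×_H X`. Fix a compatible
left-invariant metric on `G` (Birkhoff–Kakutani: take the supremum of a metric for the left
uniformity over all left translates) and a compatible metric on `X`, and send `x` to the
distance function of the closed set `{(h⁻¹, h • x) | h ∈ H} ⊆ G × X`, the `H`-orbit of `(1, x)`
for `h • (g, y) = (g * h⁻¹, h • y)`. Nonnegative `1`-Lipschitz functions on the separable space
`G × X`, recorded by their values on a dense sequence, form a Polish space on which `G` acts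
continuously by left translation, and translating a distance function by `g` gives the distance
function of the translated set. A nonempty closed set is determined by its distance function,
so `g • Φ x = Φ x'` means `g • {(h⁻¹, h • x)} = {(h⁻¹, h • x')}`, and the point `(1, x')` of the
right-hand side shows that `x' ∈ H • x`.
-/

open Filter Topology Set Metric Uniformity Pointwise TopologicalSpace

section LeftInvariantMetric

variable {G : Type*} [Group G] [PseudoMetricSpace G]

/-- Truncating at `1` keeps the supremum finite. -/
noncomputable def translateSupDist (x y : G) : ℝ := ⨆ g : G, min (dist (g * x) (g * y)) 1

lemma bddAbove_range_min_dist_mul (x y : G) :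
    BddAbove (range fun g : G => min (dist (g * x) (g * y)) 1) :=
  ⟨1, by rintro _ ⟨g, rfl⟩; exact min_le_right _ _⟩

lemma min_dist_le_translateSupDist (x y : G) : min (dist x y) 1 ≤ translateSupDist x y :=
  le_ciSup_of_le (bddAbove_range_min_dist_mul x y) 1 (by simp)

lemma translateSupDist_le {x y : G} {ε : ℝ} (h : ∀ g : G, dist (g * x) (g * y) ≤ ε) :
    translateSupDist x y ≤ ε :=
  ciSup_le fun g => min_le_of_left_le (h g)

lemma translateSupDist_self (x : G) : translateSupDist x x = 0 := by
  simp [translateSupDist]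

lemma translateSupDist_comm (x y : G) : translateSupDist x y = translateSupDist y x := by
  simp [translateSupDist, dist_comm]

lemma min_one_le_min_one_add {a b c : ℝ} (hb : 0 ≤ b) (hc : 0 ≤ c) (h : a ≤ b + c) :
    min a 1 ≤ min b 1 + min c 1 := by
  rcases le_total b 1 with hb1 | hb1 <;> rcases le_total c 1 with hc1 | hc1 <;>
    simp only [min_eq_left, min_eq_right, hb1, hc1] <;>
    linarith [min_le_left a 1, min_le_right a 1]

lemma translateSupDist_triangle (x y z : G) :
    translateSupDist x z ≤ translateSupDist x y + translateSupDist y z :=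
  ciSup_le fun g =>
    (min_one_le_min_one_add dist_nonneg dist_nonneg (dist_triangle _ (g * y) _)).trans
      (add_le_add (le_ciSup (bddAbove_range_min_dist_mul x y) g)
        (le_ciSup (bddAbove_range_min_dist_mul y z) g))

lemma translateSupDist_mul_left (g x y : G) :
    translateSupDist (g * x) (g * y) = translateSupDist x y := by
  simp only [translateSupDist, ← mul_assoc]
  exact (Equiv.mulRight g).iSup_comp (g := fun h => min (dist (h * x) (h * y)) 1)

lemma uniformity_eq_translateSupDist [IsLeftUniformGroup G] :
    𝓤 G = ⨅ ε > 0, 𝓟 {p : G × G | translateSupDist p.1 p.2 < ε} := by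
  refine le_antisymm (le_iInf₂ fun ε hε => le_principal_iff.2 ?_) ?_
  · have hsmall : {p : G × G | dist p.1 p.2 < ε / 2} ∈ 𝓤 G := dist_mem_uniformity (by positivity)
    rw [IsLeftUniformGroup.uniformity_eq] at hsmall ⊢
    obtain ⟨V, hV, hVsub⟩ := mem_comap.1 hsmall
    refine mem_of_superset (preimage_mem_comap hV) fun p hp => ?_
    -- `x⁻¹ * y` is invariant under left translation, so one `V` controls all translates
    have hle : translateSupDist p.1 p.2 ≤ ε / 2 := translateSupDist_le fun g =>
      le_of_lt (hVsub (a := (g * p.1, g * p.2)) (by simpa [mul_assoc] using hp))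
    change translateSupDist p.1 p.2 < ε
    linarith
  · refine Metric.uniformity_basis_dist.ge_iff.2 fun ε hε => ?_
    refine mem_iInf_of_mem (min ε 1) (mem_iInf_of_mem (lt_min hε one_pos) fun p hp => ?_)
    by_contra hge
    have : min ε 1 ≤ min (dist p.1 p.2) 1 := min_le_min_right _ (not_lt.1 hge)
    exact absurd (this.trans (min_dist_le_translateSupDist _ _)) (not_le.2 hp)

end LeftInvariantMetric

theorem IsTopologicalGroup.exists_leftInvariant_pseudoMetricSpace (G : Type*) [Group G]
    [TopologicalSpace G] [IsTopologicalGroup G] [FirstCountableTopology G] :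
    ∃ m : PseudoMetricSpace G, m.toUniformSpace.toTopologicalSpace = ‹TopologicalSpace G› ∧
      ∀ g x y : G, m.dist (g * x) (g * y) = m.dist x y := by
  let := IsTopologicalGroup.leftUniformSpace G
  have : (𝓤 G).IsCountablyGenerated := comap.isCountablyGenerated _ _
  let := UniformSpace.pseudoMetricSpace G
  have : IsLeftUniformGroup G := ⟨rfl⟩
  exact ⟨{ dist := translateSupDist
           dist_self := translateSupDist_self
           dist_comm := translateSupDist_comm
           dist_triangle := translateSupDist_triangle
           toUniformSpace := IsTopologicalGroup.leftUniformSpace G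
           uniformity_dist := uniformity_eq_translateSupDist (G := G) },
    rfl, translateSupDist_mul_left⟩

section LipschitzCodes

variable (Z : Type*) [PseudoMetricSpace Z] [SeparableSpace Z] [Nonempty Z]

/-- A nonnegative `1`-Lipschitz function on `Z` is recorded by its values along `denseSeq Z`;
the product topology on these records is pointwise convergence. -/
def lipschitzCodes : Set (ℕ → ℝ) :=
  {f | (∀ n, 0 ≤ f n) ∧ ∀ m n, f m ≤ f n + dist (denseSeq Z m) (denseSeq Z n)}

variable {Z}

/-- The McShane extension of `f`, viewed as a function on `denseSeq Z`. -/
noncomputable def lipschitzExtend (f : ℕ → ℝ) (z : Z) : ℝ :=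
  ⨅ n, f n + dist z (denseSeq Z n)

lemma isClosed_lipschitzCodes : IsClosed (lipschitzCodes Z) := by
  simp only [lipschitzCodes, ofPred_and, ofPred_forall]
  exact (isClosed_iInter fun n => isClosed_le continuous_const (continuous_apply n)).inter
    (isClosed_iInter fun m => isClosed_iInter fun n =>
      isClosed_le (continuous_apply m) ((continuous_apply n).add continuous_const))

instance : PolishSpace (lipschitzCodes Z) := isClosed_lipschitzCodes.polishSpace

lemma comp_denseSeq_mem_lipschitzCodes {F : Z → ℝ} (hF : LipschitzWith 1 F)
    (hF0 : ∀ z, 0 ≤ F z) : F ∘ denseSeq Z ∈ lipschitzCodes Z :=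
  ⟨fun n => hF0 _, fun m n => by simpa using hF.le_add_mul (denseSeq Z m) (denseSeq Z n)⟩

variable {f : ℕ → ℝ}

lemma lipschitzExtend_le (hf : ∀ n, 0 ≤ f n) (z : Z) (n : ℕ) :
    lipschitzExtend f z ≤ f n + dist z (denseSeq Z n) :=
  ciInf_le ⟨0, by rintro _ ⟨k, rfl⟩; exact add_nonneg (hf k) dist_nonneg⟩ n

lemma lipschitzExtend_nonneg (hf : ∀ n, 0 ≤ f n) (z : Z) : 0 ≤ lipschitzExtend f z :=
  le_ciInf fun n => add_nonneg (hf n) dist_nonneg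

lemma lipschitzWith_lipschitzExtend (hf : ∀ n, 0 ≤ f n) :
    LipschitzWith 1 (lipschitzExtend f : Z → ℝ) :=
  LipschitzWith.of_le_add fun x y => by
    rw [← sub_le_iff_le_add]
    refine le_ciInf fun n => ?_
    linarith [lipschitzExtend_le hf x n, dist_triangle x y (denseSeq Z n)]

lemma lipschitzExtend_denseSeq (hf : f ∈ lipschitzCodes Z) (n : ℕ) :
    lipschitzExtend f (denseSeq Z n) = f n :=
  le_antisymm (by simpa using lipschitzExtend_le hf.1 (denseSeq Z n) n)
    (le_ciInf fun m => hf.2 n m)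

lemma lipschitzExtend_comp_denseSeq {F : Z → ℝ} (hF : LipschitzWith 1 F) (hF0 : ∀ z, 0 ≤ F z) :
    lipschitzExtend (F ∘ denseSeq Z) = F :=
  (denseRange_denseSeq Z).equalizer (lipschitzWith_lipschitzExtend fun _ => hF0 _).continuous
    hF.continuous
    (funext fun n => lipschitzExtend_denseSeq (comp_denseSeq_mem_lipschitzCodes hF hF0) n)

lemma continuous_lipschitzExtend_apply (z : Z) :
    Continuous fun f : lipschitzCodes Z => lipschitzExtend f.1 z := by
  refine continuous_iff_continuousAt.2 fun f₀ => Metric.continuousAt_iff'.2 fun ε hε => ?_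
  obtain ⟨n, hn⟩ := (denseRange_denseSeq Z).exists_dist_lt z (show 0 < ε / 3 by positivity)
  have hcoord : ∀ᶠ f : lipschitzCodes Z in 𝓝 f₀, dist (f.1 n) (f₀.1 n) < ε / 3 :=
    Metric.continuousAt_iff'.1 ((continuous_apply n).comp continuous_subtype_val).continuousAt _
      (by positivity)
  have near : ∀ f : lipschitzCodes Z, dist (lipschitzExtend f.1 z) (f.1 n) < ε / 3 := fun f => by
    rw [← lipschitzExtend_denseSeq f.2 n]
    exact ((lipschitzWith_lipschitzExtend f.2.1).dist_le_mul _ _).trans_lt (by simpa using hn)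
  filter_upwards [hcoord] with f hf
  calc _ ≤ dist (lipschitzExtend f.1 z) (f.1 n) + dist (f.1 n) (f₀.1 n) +
        dist (f₀.1 n) (lipschitzExtend f₀.1 z) := dist_triangle4 _ _ _ _
    _ < ε := by linarith [near f, near f₀, dist_comm (f₀.1 n) (lipschitzExtend f₀.1 z)]

lemma continuous_lipschitzExtend :
    Continuous fun p : lipschitzCodes Z × Z => lipschitzExtend p.1.1 p.2 := by
  have hlip : ∀ f : lipschitzCodes Z, LipschitzWith 1 fun z : Z => lipschitzExtend f.1 z :=
    fun f => lipschitzWith_lipschitzExtend f.2.1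
  exact continuous_prod_of_continuous_lipschitzWith' _ 1 hlip continuous_lipschitzExtend_apply

noncomputable def infDistCode (S : Set Z) : lipschitzCodes Z :=
  ⟨(infDist · S) ∘ denseSeq Z,
    comp_denseSeq_mem_lipschitzCodes (lipschitz_infDist_pt S) fun _ => infDist_nonneg⟩

lemma closure_eq_of_infDistCode_eq {S T : Set Z} (hS : S.Nonempty) (hT : T.Nonempty)
    (h : infDistCode S = infDistCode T) : closure S = closure T := by
  have : (infDist · S : Z → ℝ) = (infDist · T) := (denseRange_denseSeq Z).equalizer
    (continuous_infDist_pt S) (continuous_infDist_pt T) (congrArg Subtype.val h)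
  ext z
  rw [mem_closure_iff_infDist_zero hS, mem_closure_iff_infDist_zero hT, congrFun this z]

variable {G : Type*} [Group G] [MulAction G Z] [IsIsometricSMul G Z]

lemma lipschitzWith_lipschitzExtend_smul (hf : ∀ n, 0 ≤ f n) (g : G) :
    LipschitzWith 1 fun z : Z => lipschitzExtend f (g • z) := by
  have := (lipschitzWith_lipschitzExtend hf).comp (isometry_smul Z g).lipschitz
  rwa [mul_one] at this

noncomputable instance : SMul G (lipschitzCodes Z) where
  smul g f := ⟨(fun z => lipschitzExtend f.1 (g⁻¹ • z)) ∘ denseSeq Z,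
    comp_denseSeq_mem_lipschitzCodes (lipschitzWith_lipschitzExtend_smul f.2.1 g⁻¹)
      fun _ => lipschitzExtend_nonneg f.2.1 _⟩

lemma coe_smul_lipschitzCodes (g : G) (f : lipschitzCodes Z) :
    ((g • f : lipschitzCodes Z) : ℕ → ℝ) = (fun z => lipschitzExtend f.1 (g⁻¹ • z)) ∘ denseSeq Z :=
  rfl

lemma lipschitzExtend_smul (g : G) (f : lipschitzCodes Z) :
    lipschitzExtend (g • f).1 = fun z : Z => lipschitzExtend f.1 (g⁻¹ • z) :=
  lipschitzExtend_comp_denseSeq (lipschitzWith_lipschitzExtend_smul f.2.1 g⁻¹)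
    fun _ => lipschitzExtend_nonneg f.2.1 _

noncomputable instance : MulAction G (lipschitzCodes Z) where
  one_smul f := Subtype.ext <| funext fun n => by
    simp [coe_smul_lipschitzCodes, lipschitzExtend_denseSeq f.2]
  mul_smul g g' f := Subtype.ext <| by
    rw [coe_smul_lipschitzCodes (g * g'), coe_smul_lipschitzCodes g, lipschitzExtend_smul]
    simp only [mul_inv_rev, mul_smul]

instance [TopologicalSpace G] [IsTopologicalGroup G] [ContinuousSMul G Z] :
    ContinuousSMul G (lipschitzCodes Z) :=
  ⟨(continuous_pi fun _ => continuous_lipschitzExtend.comp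
    (continuous_snd.prodMk (continuous_fst.inv.smul continuous_const))).subtype_mk _⟩

lemma smul_infDistCode (g : G) (S : Set Z) : g • infDistCode S = infDistCode (g • S) := by
  refine Subtype.ext (funext fun n => ?_)
  change lipschitzExtend ((infDist · S) ∘ denseSeq Z) (g⁻¹ • denseSeq Z n) =
    infDist (denseSeq Z n) (g • S)
  rw [lipschitzExtend_comp_denseSeq (lipschitz_infDist_pt S) fun _ => infDist_nonneg]
  have := infDist_image (x := g⁻¹ • denseSeq Z n) (t := S) (isometry_smul Z g)
  rwa [image_smul, smul_inv_smul, eq_comm] at this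

end LipschitzCodes

section InducedAction

variable (G X : Type*) [Group G]

abbrev mulActionFst : MulAction G (G × X) where
  smul g p := (g * p.1, p.2)
  one_smul p := Prod.ext (one_mul p.1) rfl
  mul_smul g g' p := Prod.ext (mul_assoc g g' p.1) rfl

attribute [local instance] mulActionFst

lemma mulActionFst_smul_def (g : G) (p : G × X) : g • p = (g * p.1, p.2) := rfl

variable {G X}

/-- The `H`-orbit of `(1, x)` under `h • (g, y) = (g * h⁻¹, h • y)`, i.e. the point of the
induced space `G ×_H X` represented by `x`. -/
def inducedOrbit (H : Subgroup G) [MulAction H X] (x : X) : Set (G × X) :=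
  range fun h : H => ((h : G)⁻¹, h • x)

variable {H : Subgroup G} [MulAction H X]

lemma one_mem_inducedOrbit (x : X) : ((1 : G), x) ∈ inducedOrbit H x :=
  ⟨1, by simp⟩

lemma inducedOrbit_smul (h₀ : H) (x : X) :
    inducedOrbit H (h₀ • x) = (h₀ : G) • inducedOrbit H x := by
  rw [inducedOrbit, inducedOrbit, smul_set_range,
    ← (Equiv.mulRight h₀⁻¹).surjective.range_comp]
  congr 1
  funext h
  simp [mulActionFst_smul_def, mul_smul]

lemma isClosed_inducedOrbit [TopologicalSpace G] [IsTopologicalGroup G] [TopologicalSpace X]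
    [ContinuousSMul H X] [T2Space X] (hH : IsClosed (H : Set G)) (x : X) :
    IsClosed (inducedOrbit H x) := by
  have hemb : IsClosedEmbedding (Prod.map (fun h : H => (h : G)⁻¹) (id : X → X)) :=
    ((Homeomorph.inv G).isClosedEmbedding.comp hH.isClosedEmbedding_subtypeVal).prodMap
      IsClosedEmbedding.id
  have hgraph : inducedOrbit H x =
      Prod.map (fun h : H => (h : G)⁻¹) id '' {q : H × X | q.1 • x = q.2} := by
    ext p
    constructor
    · rintro ⟨h, rfl⟩
      exact ⟨(h, h • x), rfl, rfl⟩
    · rintro ⟨⟨h, y⟩, hq, rfl⟩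
      exact ⟨h, Prod.ext rfl hq⟩
  rw [hgraph]
  exact hemb.isClosedMap _ (isClosed_eq (continuous_fst.smul continuous_const) continuous_snd)

variable [PseudoMetricSpace G] [PseudoMetricSpace X]

lemma upperSemicontinuous_infDist_inducedOrbit [ContinuousConstSMul H X] (z : G × X) :
    UpperSemicontinuous fun x : X => infDist z (inducedOrbit H x) := by
  intro x c hc
  obtain ⟨_, ⟨h, rfl⟩, hp⟩ :=
    (infDist_lt_iff (s := inducedOrbit H x) ⟨_, one_mem_inducedOrbit x⟩).1 hc
  have hcont : Continuous fun x' : X => dist z (((h : G)⁻¹, h • x') : G × X) :=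
    continuous_const.dist (continuous_const.prodMk (continuous_const_smul h))
  filter_upwards [hcont.continuousAt.eventually_lt continuousAt_const hp] with x' hx'
  exact (infDist_le_dist_of_mem (s := inducedOrbit H x') ⟨h, rfl⟩).trans_lt hx'

variable [SeparableSpace G] [SeparableSpace X] [Nonempty X]

lemma measurable_infDistCode_inducedOrbit [MeasurableSpace X] [OpensMeasurableSpace X]
    [ContinuousConstSMul H X] :
    Measurable fun x : X => infDistCode (inducedOrbit H x) :=
  (measurable_pi_lambda _ fun _ =>
    (upperSemicontinuous_infDist_inducedOrbit _).measurable).subtype_mk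

variable [IsTopologicalGroup G] [IsIsometricSMul G G]

instance : IsIsometricSMul G (G × X) :=
  ⟨fun g => (isometry_smul G g).prodMap isometry_id⟩

instance : ContinuousSMul G (G × X) :=
  ⟨(continuous_fst.mul (continuous_fst.comp continuous_snd)).prodMk
    (continuous_snd.comp continuous_snd)⟩

theorem exists_smul_infDistCode_inducedOrbit_iff [ContinuousSMul H X] [T2Space X]
    (hH : IsClosed (H : Set G)) {x x' : X} :
    (∃ g : G, g • infDistCode (inducedOrbit H x) = infDistCode (inducedOrbit H x')) ↔
      ∃ h : H, h • x = x' := by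
  constructor
  · rintro ⟨g, hg⟩
    rw [smul_infDistCode] at hg
    have hcl := closure_eq_of_infDistCode_eq ⟨_, smul_mem_smul_set (one_mem_inducedOrbit x)⟩
      ⟨_, one_mem_inducedOrbit x'⟩ hg
    rw [((isClosed_inducedOrbit hH x).smul g).closure_eq,
      (isClosed_inducedOrbit hH x').closure_eq] at hcl
    obtain ⟨_, ⟨h, rfl⟩, hp⟩ : ((1 : G), x') ∈ g • inducedOrbit H x :=
      hcl ▸ one_mem_inducedOrbit x'
    exact ⟨h, congrArg Prod.snd hp⟩
  · rintro ⟨h, rfl⟩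
    exact ⟨h, by rw [smul_infDistCode, inducedOrbit_smul]⟩

end InducedAction

lemma measurableSet_borel_preimage_prodMap {X Y : Type*} [TopologicalSpace X]
    [SecondCountableTopology X] [TopologicalSpace Y] [SecondCountableTopology Y] {Φ : X → Y}
    (hΦ : @Measurable X Y (borel X) (borel Y) Φ) {S : Set (Y × Y)}
    (hS : @MeasurableSet (Y × Y) (borel (Y × Y)) S) :
    @MeasurableSet (X × X) (borel (X × X)) (Prod.map Φ Φ ⁻¹' S) := by
  borelize X Y
  rw [← BorelSpace.measurable_eq] at hS ⊢
  exact (hΦ.prodMap hΦ) hS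

theorem exists_continuousAction_borelReduction {G : Type*} [Group G] [TopologicalSpace G]
    [IsTopologicalGroup G] [PolishSpace G] {H : Subgroup G} (hH : IsClosed (H : Set G))
    {X : Type*} [TopologicalSpace X] [PolishSpace X] [Nonempty X] [MulAction H X]
    [ContinuousSMul H X] :
    ∃ (Y : Type) (_ : TopologicalSpace Y) (_ : PolishSpace Y) (α : G → Y → Y) (Φ : X → Y),
      (Continuous fun p : G × Y => α p.1 p.2) ∧ (∀ y, α 1 y = y) ∧
      (∀ (g g' : G) (y : Y), α (g * g') y = α g (α g' y)) ∧
      @Measurable X Y (borel X) (borel Y) Φ ∧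
      ∀ x x', (∃ g : G, α g (Φ x) = Φ x') ↔ ∃ h : H, h • x = x' := by
  obtain ⟨m, hm, hinv⟩ := IsTopologicalGroup.exists_leftInvariant_pseudoMetricSpace G
  let := m.replaceTopology hm.symm
  have : IsIsometricSMul G G := ⟨fun g => Isometry.of_dist_eq (hinv g)⟩
  let := pseudoMetrizableSpacePseudoMetric X
  let := mulActionFst G X
  refine ⟨lipschitzCodes (G × X), inferInstance, inferInstance, (· • ·),
    fun x => infDistCode (inducedOrbit H x), continuous_smul, one_smul _, mul_smul, ?_,
    fun x x' => exists_smul_infDistCode_inducedOrbit_iff hH⟩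
  borelize X
  rw [← BorelSpace.measurable_eq (α := lipschitzCodes (G × X))]
  exact measurable_infDistCode_inducedOrbit

/-- for a continuous action `β` of a closed subgroup `H` of a Polish group
`G` on a Polish space `X`, there is a continuous action `α` of `G` on a Polish space `Y`
such that the orbit equivalence relation of `β` is Borel iff that of `α` is Borel. -/
theorem stmt_17 (G : Type*) [Group G] [TopologicalSpace G] [IsTopologicalGroup G]
    [PolishSpace G] (H : Subgroup G) (hH : IsClosed (H : Set G))
    (X : Type*) [TopologicalSpace X] [PolishSpace X]
    (β : H → X → X) (hβc : Continuous fun p : H × X => β p.1 p.2)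
    (hβ1 : ∀ x, β 1 x = x) (hβm : ∀ (h h' : H) (x : X), β (h * h') x = β h (β h' x)) :
    ∃ (Y : Type) (_ : TopologicalSpace Y) (_ : PolishSpace Y) (α : G → Y → Y),
      (Continuous fun p : G × Y => α p.1 p.2) ∧
      (∀ y, α 1 y = y) ∧ (∀ (g g' : G) (y : Y), α (g * g') y = α g (α g' y)) ∧
      (@MeasurableSet (X × X) (borel _) {p : X × X | ∃ h : H, β h p.1 = p.2} ↔
        @MeasurableSet (Y × Y) (borel _) {p : Y × Y | ∃ g : G, α g p.1 = p.2}) := by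
  by_cases hB : @MeasurableSet (X × X) (borel _) {p : X × X | ∃ h : H, β h p.1 = p.2}
  · exact ⟨Unit, inferInstance, inferInstance, fun _ y => y, continuous_snd, fun _ => rfl,
      fun _ _ _ => rfl, iff_of_true hB (@Subsingleton.measurableSet _ (borel _) _ _)⟩
  have : Nonempty X := not_isEmpty_iff.1 fun _ => hB (by simp [Set.eq_empty_of_isEmpty])
  let : MulAction H X := { smul := β, one_smul := hβ1, mul_smul := hβm }
  have : ContinuousSMul H X := ⟨hβc⟩
  obtain ⟨Y, tY, pY, α, Φ, hαc, hα1, hαm, hΦ, hred⟩ :=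
    exists_continuousAction_borelReduction hH (X := X)
  refine ⟨Y, tY, pY, α, hαc, hα1, hαm, iff_of_false hB fun hα => hB ?_⟩
  have hE : {p : X × X | ∃ h : H, β h p.1 = p.2} =
      Prod.map Φ Φ ⁻¹' {q : Y × Y | ∃ g : G, α g q.1 = q.2} :=
    Set.ext fun p => (hred p.1 p.2).symm
  rw [hE]
  exact measurableSet_borel_preimage_prodMap hΦ hα
end
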